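/- arXiv:2209.01851 — 6 statements merged into one kernel-verified Lean document; each statement's English description precedes it below -/
import Mathlib

section
/- Every interval graph is a grounded ⌐-graph, i.e., every interval graph admits a grounded ⌐-representation. -/
open Set

/-- The vertical segment of an `⌐`-shape: the closed segment from `(p, 0)` to `(p, h)`. -/
def vertSeg (p h : ℝ) : Set (ℝ × ℝ) := {q | q.1 = p ∧ 0 ≤ q.2 ∧ q.2 ≤ h}

/-- The horizontal segment of an `⌐`-shape: the closed segment from `(p - w, h)` to `(p, h)`. -/
def horizSeg (p h w : ℝ) : Set (ℝ × ℝ) := {q | q.2 = h ∧ p - w ≤ q.1 ∧ q.1 ≤ p}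

/-- The `⌐`-shape with anchor x-coordinate `p`, height `h` and width `w`. -/
def LShape (p h w : ℝ) : Set (ℝ × ℝ) := vertSeg p h ∪ horizSeg p h w

/-- A grounded `⌐`-representation of a simple graph `G`: each vertex `v` gets an `⌐`-shape
with anchor x-coordinate `p v`, height `ht v > 0` and width `wd v > 0`; the anchors are
pairwise distinct, two distinct shapes meet in at most one point, and two distinct vertices
are adjacent iff their shapes intersect. -/
structure GroundedLRep {V : Type*} (G : SimpleGraph V) where
  p : V → ℝ
  ht : V → ℝ
  wd : V → ℝ
  ht_pos : ∀ v, 0 < ht v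
  wd_pos : ∀ v, 0 < wd v
  p_inj : Function.Injective p
  single : ∀ u v : V, u ≠ v →
    (LShape (p u) (ht u) (wd u) ∩ LShape (p v) (ht v) (wd v)).Subsingleton
  adj_iff : ∀ u v : V, u ≠ v →
    (G.Adj u v ↔ (LShape (p u) (ht u) (wd u) ∩ LShape (p v) (ht v) (wd v)).Nonempty)

/-- The `⌐`-shape assigned to vertex `v` by a grounded `⌐`-representation. -/
def GroundedLRep.shape {V : Type*} {G : SimpleGraph V} (R : GroundedLRep G) (v : V) :
    Set (ℝ × ℝ) := LShape (R.p v) (R.ht v) (R.wd v)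

/-- If the anchors differ and `h₂ < h₁`, two `⌐`-shapes intersect in at most the point
`(p₁, h₂)`. -/
lemma lshape_inter_subset {p₁ h₁ w₁ p₂ h₂ w₂ : ℝ} (hp : p₁ ≠ p₂) (hh : h₂ < h₁) :
    LShape p₁ h₁ w₁ ∩ LShape p₂ h₂ w₂ ⊆ {((p₁ : ℝ), h₂)} := by
  rintro ⟨x, y⟩ ⟨h1 | h1, h2 | h2⟩
  · exact absurd (h1.1.symm.trans h2.1) hp
  · simp only [mem_singleton_iff, Prod.mk.injEq]
    exact ⟨h1.1, h2.1⟩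
  · exfalso
    have h1' : y = h₁ := h1.1
    have h2' : y ≤ h₂ := h2.2.2
    linarith
  · exfalso
    have : h₁ = h₂ := h1.1.symm.trans h2.1
    linarith

lemma lshape_inter_nonempty_iff {p₁ h₁ w₁ p₂ h₂ w₂ : ℝ} (hp : p₁ < p₂) (hh : h₂ < h₁)
    (h₂0 : 0 < h₂) :
    (LShape p₁ h₁ w₁ ∩ LShape p₂ h₂ w₂).Nonempty ↔ p₂ - w₂ ≤ p₁ := by
  constructor
  · rintro ⟨q, hq⟩
    have hq' : q = (p₁, h₂) := lshape_inter_subset (ne_of_lt hp) hh hq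
    subst hq'
    rcases hq.2 with hv | hh'
    · exact absurd hv.1 (ne_of_lt hp)
    · exact hh'.2.1
  · intro h
    exact ⟨(p₁, h₂), Or.inl ⟨rfl, h₂0.le, hh.le⟩, Or.inr ⟨rfl, h, hp.le⟩⟩

/-- Every interval graph is a grounded `⌐`-graph. -/
theorem interval_graph_is_grounded_L {V : Type*} [Fintype V] (G : SimpleGraph V)
    (hInterval : ∃ a b : V → ℝ, (∀ v, a v ≤ b v) ∧
      ∀ u v : V, u ≠ v →
        (G.Adj u v ↔ (Set.Icc (a u) (b u) ∩ Set.Icc (a v) (b v)).Nonempty)) :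
    Nonempty (GroundedLRep G) := by
  classical
  obtain ⟨a, b, hab, hadj⟩ := hInterval
  set n : ℕ := Fintype.card V with hn
  set f : V → ℝ := fun v => ((Fintype.equivFin V v : ℕ) : ℝ) + 1 with hf
  have hf_pos : ∀ v, 0 < f v := by
    intro v; simp only [hf]; positivity
  have hf_le : ∀ v, f v ≤ n := by
    intro v
    have : (Fintype.equivFin V v : ℕ) < n := (Fintype.equivFin V v).isLt
    simp only [hf]
    have h2 : ((Fintype.equivFin V v : ℕ) : ℝ) + 1 ≤ n := by
      exact_mod_cast Nat.succ_le_of_lt this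
    linarith
  have hf_inj : Function.Injective f := by
    intro u v huv
    simp only [hf, add_left_inj, Nat.cast_inj] at huv
    exact (Fintype.equivFin V).injective (Fin.ext huv)
  -- all relevant positive gaps
  set D : Finset ℝ := (((Finset.univ ×ˢ Finset.univ : Finset (V × V)).image
      (fun q => a q.2 - b q.1)) ∪ ((Finset.univ ×ˢ Finset.univ : Finset (V × V)).image
      (fun q => b q.2 - b q.1))).filter (fun x => 0 < x) with hD
  obtain ⟨δ, hδ0, hδle⟩ : ∃ δ : ℝ, 0 < δ ∧ ∀ x ∈ D, δ ≤ x := by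
    rcases D.eq_empty_or_nonempty with h | h
    · exact ⟨1, one_pos, by simp [h]⟩
    · refine ⟨D.min' h, ?_, fun x hx => D.min'_le x hx⟩
      have hm := D.min'_mem h
      simp only [hD, Finset.mem_filter] at hm
      exact hm.2
  set ε : ℝ := δ / (2 * (n + 1)) with hε
  have hε0 : 0 < ε := by
    apply div_pos hδ0; positivity
  have hcancel : ε * (2 * ((n : ℝ) + 1)) = δ := by
    rw [hε]; field_simp
  have hεf : ∀ v, ε * f v < δ := by
    intro v
    have h1 : ε * f v ≤ ε * n := mul_le_mul_of_nonneg_left (hf_le v) hε0.le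
    nlinarith [hε0]
  set p : V → ℝ := fun v => b v + ε * f v with hp
  have hbp : ∀ v, b v < p v := by
    intro v
    have : 0 < ε * f v := mul_pos hε0 (hf_pos v)
    simp only [hp]; linarith
  have hC1 : ∀ u v : V, b u < a v → p u < a v := by
    intro u v h
    have hmem : a v - b u ∈ D := by
      rw [hD, Finset.mem_filter]
      refine ⟨Finset.mem_union_left _ (Finset.mem_image.mpr ⟨(u, v), by simp, rfl⟩), by linarith⟩
    have := hδle _ hmem
    have := hεf u
    simp only [hp]; linarith
  have hC2 : ∀ u v : V, b u < b v → p u < p v := by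
    intro u v h
    have hmem : b v - b u ∈ D := by
      rw [hD, Finset.mem_filter]
      refine ⟨Finset.mem_union_right _ (Finset.mem_image.mpr ⟨(u, v), by simp, rfl⟩), by linarith⟩
    have h1 := hδle _ hmem
    have h2 := hεf u
    have h3 : 0 < ε * f v := mul_pos hε0 (hf_pos v)
    simp only [hp]; linarith
  have hpinj : Function.Injective p := by
    intro u v huv
    rcases lt_trichotomy (b u) (b v) with h | h | h
    · exact absurd huv (ne_of_lt (hC2 u v h))
    · apply hf_inj
      simp only [hp, h] at huv
      exact mul_left_cancel₀ (ne_of_gt hε0) (by linarith)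
    · exact absurd huv.symm (ne_of_lt (hC2 v u h))
  set ht : V → ℝ := fun v => Real.exp (-(p v)) with hht
  have hht_pos : ∀ v, 0 < ht v := fun v => Real.exp_pos _
  have htanti : ∀ u v : V, p u < p v → ht v < ht u := by
    intro u v h
    simp only [hht]
    exact Real.exp_lt_exp.mpr (by linarith)
  set wd : V → ℝ := fun v => p v - a v with hwd
  have hwd_pos : ∀ v, 0 < wd v := by
    intro v
    have h1 := hab v
    have h2 := hbp v
    simp only [hwd]; linarith
  -- main equivalence, assuming p u < p v
  have main : ∀ u v : V, u ≠ v → p u < p v →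
      (G.Adj u v ↔ (LShape (p u) (ht u) (wd u) ∩ LShape (p v) (ht v) (wd v)).Nonempty) := by
    intro u v huv hpuv
    rw [lshape_inter_nonempty_iff hpuv (htanti u v hpuv) (hht_pos v), hadj u v huv]
    have hwdv : p v - wd v = a v := by simp [hwd]
    rw [hwdv]
    constructor
    · rintro ⟨x, hx1, hx2⟩
      have := hbp u
      have : a v ≤ b u := le_trans hx2.1 hx1.2
      linarith [hbp u]
    · intro h
      have h1 : a v ≤ b u := by
        by_contra hc
        push_neg at hc
        exact absurd h (not_le.mpr (hC1 u v hc))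
      have h2 : a u ≤ b v := by
        by_contra hc
        push_neg at hc
        have : b v < b u := lt_of_lt_of_le hc (hab u)
        exact absurd hpuv (not_lt.mpr (le_of_lt (hC2 v u this)))
      exact ⟨max (a u) (a v), ⟨le_max_left _ _, max_le (hab u) h1⟩,
        ⟨le_max_right _ _, max_le h2 (hab v)⟩⟩
  refine ⟨⟨p, ht, wd, hht_pos, hwd_pos, hpinj, ?_, ?_⟩⟩
  · intro u v huv
    rcases lt_or_gt_of_ne (fun h => huv (hpinj h)) with h | h
    · exact Set.Subsingleton.anti Set.subsingleton_singleton
        (lshape_inter_subset (ne_of_lt h) (htanti u v h))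
    · rw [Set.inter_comm]
      exact Set.Subsingleton.anti Set.subsingleton_singleton
        (lshape_inter_subset (ne_of_lt h) (htanti v u h))
  · intro u v huv
    rcases lt_or_gt_of_ne (fun h => huv (hpinj h)) with h | h
    · exact main u v huv h
    · rw [Set.inter_comm, G.adj_comm]
      exact main v u (Ne.symm huv) h
end

section
/- If a bipartite graph G with parts A and B has a stick representation (with A represented by vertical segments and B by horizontal segments), then G has a nice grounded ⌐-representation with respect to the parts A and B; in particular, every stick graph is a grounded ⌐-graph. -/
open Set

/-- `S(v)` is an `⌐ʰ`-shape: every intersection point with another shape lies on its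
horizontal segment. -/
def GroundedLRep.IsHShape {V : Type*} {G : SimpleGraph V} (R : GroundedLRep G) (v : V) : Prop :=
  ∀ u : V, u ≠ v → ∀ q ∈ R.shape u ∩ R.shape v, q ∈ horizSeg (R.p v) (R.ht v) (R.wd v)

/-- `S(v)` is an `⌐ᵛ`-shape: every intersection point with another shape lies on its
vertical segment. -/
def GroundedLRep.IsVShape {V : Type*} {G : SimpleGraph V} (R : GroundedLRep G) (v : V) : Prop :=
  ∀ u : V, u ≠ v → ∀ q ∈ R.shape u ∩ R.shape v, q ∈ vertSeg (R.p v) (R.ht v)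

/-- A grounded `⌐`-representation of a bipartite graph with parts `A` and `B` is *nice* if
every vertex of `A` is represented by an `⌐ʰ`-shape and every vertex of `B` by an `⌐ᵛ`-shape. -/
def GroundedLRep.Nice {V : Type*} {G : SimpleGraph V} (R : GroundedLRep G)
    (A B : Set V) : Prop :=
  (∀ a ∈ A, R.IsHShape a) ∧ (∀ b ∈ B, R.IsVShape b)

/-- A vertical stick segment with ground (lower) endpoint `(x, -x)` on the line
`x + y = 0` and length `len`. -/
def stickVSeg (x len : ℝ) : Set (ℝ × ℝ) := {q | q.1 = x ∧ -x ≤ q.2 ∧ q.2 ≤ -x + len}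

/-- A horizontal stick segment with ground (left) endpoint `(x, -x)` on the line
`x + y = 0` and length `len`. -/
def stickHSeg (x len : ℝ) : Set (ℝ × ℝ) := {q | q.2 = -x ∧ x ≤ q.1 ∧ q.1 ≤ x + len}

/-- A stick representation of a bipartite graph `G` with parts `A` and `B`: each `a ∈ A` gets a
non-degenerate vertical segment whose lower endpoint lies on the line `x + y = 0`, each `b ∈ B`
gets a non-degenerate horizontal segment whose left endpoint lies on the line `x + y = 0`; the
ground endpoints are pairwise distinct, two segments meet in at most one point, and two distinct
vertices are adjacent iff their segments intersect. -/
structure StickRep {V : Type*} (G : SimpleGraph V) (A B : Set V) where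
  x : V → ℝ
  len : V → ℝ
  len_pos : ∀ v, 0 < len v
  x_inj : Function.Injective x
  seg : V → Set (ℝ × ℝ)
  seg_A : ∀ a ∈ A, seg a = stickVSeg (x a) (len a)
  seg_B : ∀ b ∈ B, seg b = stickHSeg (x b) (len b)
  single : ∀ u v : V, u ≠ v → (seg u ∩ seg v).Subsingleton
  adj_iff : ∀ u v : V, u ≠ v → (G.Adj u v ↔ (seg u ∩ seg v).Nonempty)

/-- `A` and `B` form a bipartition of the simple graph `G`. -/
def IsBipartitionOf {V : Type*} (G : SimpleGraph V) (A B : Set V) : Prop :=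
  A ∪ B = Set.univ ∧ Disjoint A B ∧
    ∀ u v : V, G.Adj u v → (u ∈ A ∧ v ∈ B) ∨ (u ∈ B ∧ v ∈ A)

lemma LAA_empty {xa xa' C la la' : ℝ} (hne : xa ≠ xa') :
    LShape xa (xa + C) la ∩ LShape xa' (xa' + C) la' = ∅ := by
  ext q
  simp only [LShape, vertSeg, horizSeg, mem_inter_iff, mem_union, mem_setOf_eq,
    mem_empty_iff_false, iff_false]
  rintro ⟨⟨e1, e2, e3⟩ | ⟨e1, e2, e3⟩, ⟨f1, f2, f3⟩ | ⟨f1, f2, f3⟩⟩ <;>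
    exact hne (by linarith)

lemma LBB_empty {xb xb' C ε lb lb' δ : ℝ} (hδpos : 0 ≤ δ) (hδ : δ < |xb - xb'|) :
    LShape xb (xb + lb + C + ε) δ ∩ LShape xb' (xb' + lb' + C + ε) δ = ∅ := by
  ext q
  simp only [LShape, vertSeg, horizSeg, mem_inter_iff, mem_union, mem_setOf_eq,
    mem_empty_iff_false, iff_false]
  rintro ⟨⟨e1, e2, e3⟩ | ⟨e1, e2, e3⟩, ⟨f1, f2, f3⟩ | ⟨f1, f2, f3⟩⟩ <;>
    rcases abs_cases (xb - xb') with ⟨h, h'⟩ | ⟨h, h'⟩ <;> linarith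

lemma Lmix_subset {xa la xb lb C ε δ : ℝ} (hlb : 0 < lb) (hε : 0 < ε)
    (hεlt : xb + lb < xa → xb + lb + ε < xa) (hne : xa ≠ xb) :
    LShape xa (xa + C) la ∩ LShape xb (xb + lb + C + ε) δ ⊆
      horizSeg xa (xa + C) la ∩ vertSeg xb (xb + lb + C + ε) := by
  intro q hq
  simp only [LShape, vertSeg, horizSeg, mem_inter_iff, mem_union, mem_setOf_eq] at hq ⊢
  obtain ⟨h1 | h1, h2 | h2⟩ := hq
  · exact absurd (h1.1.symm.trans h2.1) hne
  · obtain ⟨e1, e2, e3⟩ := h1; obtain ⟨f1, f2, f3⟩ := h2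
    exfalso; linarith
  · exact ⟨h1, h2⟩
  · obtain ⟨e1, e2, e3⟩ := h1; obtain ⟨f1, f2, f3⟩ := h2
    exfalso
    rcases lt_or_ge (xb + lb) xa with h | h
    · have := hεlt h; linarith
    · linarith

lemma Lmix_nonempty_iff {xa la xb lb C ε δ : ℝ} (hlb : 0 < lb) (hε : 0 < ε)
    (hεlt : xb + lb < xa → xb + lb + ε < xa) (hne : xa ≠ xb) (hC : 0 ≤ xa + C) :
    (LShape xa (xa + C) la ∩ LShape xb (xb + lb + C + ε) δ).Nonempty ↔
      (xa - la ≤ xb ∧ xb ≤ xa ∧ xa ≤ xb + lb) := by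
  constructor
  · rintro ⟨q, hq⟩
    have hq' := Lmix_subset hlb hε hεlt hne hq
    simp only [horizSeg, vertSeg, mem_inter_iff, mem_setOf_eq] at hq'
    obtain ⟨⟨e1, e2, e3⟩, ⟨f1, f2, f3⟩⟩ := hq'
    refine ⟨by linarith, by linarith, ?_⟩
    by_contra h
    push_neg at h
    have := hεlt h
    linarith
  · rintro ⟨h1, h2, h3⟩
    refine ⟨(xb, xa + C), Or.inr ?_, Or.inl ?_⟩
    · show (xb, xa + C).2 = xa + C ∧ xa - la ≤ (xb, xa + C).1 ∧ (xb, xa + C).1 ≤ xa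
      refine ⟨rfl, ?_, ?_⟩ <;> show _ ≤ _ <;> simp <;> linarith
    · show (xb, xa + C).1 = xb ∧ 0 ≤ (xb, xa + C).2 ∧ (xb, xa + C).2 ≤ xb + lb + C + ε
      refine ⟨rfl, ?_, ?_⟩ <;> show _ ≤ _ <;> simp <;> linarith

lemma stick_mix_iff {xa la xb lb : ℝ} :
    (stickVSeg xa la ∩ stickHSeg xb lb).Nonempty ↔
      (xa - la ≤ xb ∧ xb ≤ xa ∧ xa ≤ xb + lb) := by
  constructor
  · rintro ⟨q, ⟨e1, e2, e3⟩, ⟨f1, f2, f3⟩⟩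
    exact ⟨by linarith, by linarith, by linarith⟩
  · rintro ⟨h1, h2, h3⟩
    refine ⟨(xa, -xb), ⟨rfl, ?_, ?_⟩, ⟨rfl, ?_, ?_⟩⟩ <;> show _ ≤ _ <;> simp <;> linarith

/-- If a bipartite graph `G` with parts `A` and `B` has a stick representation, then it has a
nice grounded `⌐`-representation; in particular every stick graph is a grounded `⌐`-graph. -/
theorem stick_to_nice_grounded_L {V : Type*} [Fintype V] (G : SimpleGraph V) (A B : Set V)
    (hbip : IsBipartitionOf G A B) (hstick : Nonempty (StickRep G A B)) :
    ∃ R : GroundedLRep G, R.Nice A B := by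
  classical
  obtain ⟨R⟩ := hstick
  obtain ⟨hUnion, hDisj, hAdj⟩ := hbip
  have hmemB : ∀ v : V, v ∉ A → v ∈ B := by
    intro v hv
    have h : v ∈ A ∪ B := hUnion ▸ mem_univ v
    rcases h with h | h
    · exact absurd h hv
    · exact h
  have hABne : ∀ a ∈ A, ∀ b ∈ B, a ≠ b := by
    intro a ha b hb h
    exact Set.disjoint_left.mp hDisj ha (h ▸ hb)
  have hnotA : ∀ b ∈ B, b ∉ A := by
    intro b hb hA
    exact Set.disjoint_left.mp hDisj hA hb
  -- the height offset constant
  set C : ℝ := 1 + ∑ v, (|R.x v| + R.len v) with hCdef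
  have hC : ∀ v, 0 < R.x v + C := by
    intro v
    have h1 : |R.x v| + R.len v ≤ ∑ w, (|R.x w| + R.len w) :=
      Finset.single_le_sum (f := fun w => |R.x w| + R.len w)
        (fun w _ => add_nonneg (abs_nonneg _) (R.len_pos w).le) (Finset.mem_univ v)
    have h2 := neg_abs_le (R.x v)
    have h3 := R.len_pos v
    simp only [hCdef]
    linarith
  -- the small perturbation ε
  set T : Finset ℝ := insert 1 (((Finset.univ ×ˢ Finset.univ : Finset (V × V)).filter
      (fun p => 0 < R.x p.1 - R.x p.2 - R.len p.2)).image
      (fun p => R.x p.1 - R.x p.2 - R.len p.2)) with hTdef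
  have hTne : T.Nonempty := ⟨1, Finset.mem_insert_self _ _⟩
  have hTpos : ∀ t ∈ T, 0 < t := by
    intro t ht
    rcases Finset.mem_insert.mp ht with h | h
    · rw [h]; norm_num
    · obtain ⟨p, hp, rfl⟩ := Finset.mem_image.mp h
      exact (Finset.mem_filter.mp hp).2
  set ε : ℝ := T.min' hTne / 2 with hεdef
  have hεpos : 0 < ε := by
    have := hTpos _ (T.min'_mem hTne)
    simp only [hεdef]
    linarith
  have hεlt : ∀ u v : V, R.x v + R.len v < R.x u → R.x v + R.len v + ε < R.x u := by
    intro u v h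
    have hmem : R.x u - R.x v - R.len v ∈ T := by
      refine Finset.mem_insert_of_mem (Finset.mem_image.mpr ⟨(u, v), ?_, rfl⟩)
      exact Finset.mem_filter.mpr ⟨by simp, by simpa using by linarith⟩
    have h1 := T.min'_le _ hmem
    have h2 := hTpos _ (T.min'_mem hTne)
    simp only [hεdef] at *
    linarith
  -- the small width δ
  set D : Finset ℝ := insert 1 (((Finset.univ ×ˢ Finset.univ : Finset (V × V)).filter
      (fun p => p.1 ≠ p.2)).image (fun p => |R.x p.1 - R.x p.2|)) with hDdef
  have hDne : D.Nonempty := ⟨1, Finset.mem_insert_self _ _⟩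
  have hDpos : ∀ t ∈ D, 0 < t := by
    intro t ht
    rcases Finset.mem_insert.mp ht with h | h
    · rw [h]; norm_num
    · obtain ⟨p, hp, rfl⟩ := Finset.mem_image.mp h
      have hne := (Finset.mem_filter.mp hp).2
      have hxne : R.x p.1 ≠ R.x p.2 := fun h' => hne (R.x_inj h')
      exact abs_pos.mpr (sub_ne_zero.mpr hxne)
  set δ : ℝ := D.min' hDne / 2 with hδdef
  have hδpos : 0 < δ := by
    have := hDpos _ (D.min'_mem hDne)
    simp only [hδdef]
    linarith
  have hδlt : ∀ u v : V, u ≠ v → δ < |R.x u - R.x v| := by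
    intro u v h
    have hmem : |R.x u - R.x v| ∈ D := by
      refine Finset.mem_insert_of_mem (Finset.mem_image.mpr ⟨(u, v), ?_, rfl⟩)
      exact Finset.mem_filter.mpr ⟨by simp, h⟩
    have h1 := D.min'_le _ hmem
    have h2 := hDpos _ (D.min'_mem hDne)
    simp only [hδdef] at *
    linarith
  -- the data of the grounded ⌐-representation
  set P : V → ℝ := R.x with hPdef
  set H : V → ℝ := fun v => if v ∈ A then R.x v + C else R.x v + R.len v + C + ε with hHdef
  set W : V → ℝ := fun v => if v ∈ A then R.len v else δ with hWdef
  have hHA : ∀ a ∈ A, H a = R.x a + C := by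
    intro a ha; simp only [hHdef, if_pos ha]
  have hWA : ∀ a ∈ A, W a = R.len a := by
    intro a ha; simp only [hWdef, if_pos ha]
  have hHB : ∀ b ∈ B, H b = R.x b + R.len b + C + ε := by
    intro b hb; simp only [hHdef, if_neg (hnotA b hb)]
  have hWB : ∀ b ∈ B, W b = δ := by
    intro b hb; simp only [hWdef, if_neg (hnotA b hb)]
  have hxne : ∀ u v : V, u ≠ v → R.x u ≠ R.x v := by
    intro u v h h'
    exact h (R.x_inj h')
  -- empty intersections within parts
  have hempty_AA : ∀ a ∈ A, ∀ a' ∈ A, a ≠ a' →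
      LShape (P a) (H a) (W a) ∩ LShape (P a') (H a') (W a') = ∅ := by
    intro a ha a' ha' h
    rw [hHA a ha, hHA a' ha', hWA a ha, hWA a' ha']
    exact LAA_empty (hxne a a' h)
  have hempty_BB : ∀ b ∈ B, ∀ b' ∈ B, b ≠ b' →
      LShape (P b) (H b) (W b) ∩ LShape (P b') (H b') (W b') = ∅ := by
    intro b hb b' hb' h
    rw [hHB b hb, hHB b' hb', hWB b hb, hWB b' hb']
    exact LBB_empty hδpos.le (hδlt b b' h)
  -- mixed intersections
  have hmix_sub : ∀ a ∈ A, ∀ b ∈ B,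
      LShape (P a) (H a) (W a) ∩ LShape (P b) (H b) (W b) ⊆
        horizSeg (P a) (H a) (W a) ∩ vertSeg (P b) (H b) := by
    intro a ha b hb
    rw [hHA a ha, hHB b hb, hWA a ha, hWB b hb]
    exact Lmix_subset (R.len_pos b) hεpos (hεlt a b) (hxne a b (hABne a ha b hb))
  have hmix_iff : ∀ a ∈ A, ∀ b ∈ B,
      ((LShape (P a) (H a) (W a) ∩ LShape (P b) (H b) (W b)).Nonempty ↔ G.Adj a b) := by
    intro a ha b hb
    have hne := hABne a ha b hb
    rw [hHA a ha, hHB b hb, hWA a ha, hWB b hb,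
      Lmix_nonempty_iff (R.len_pos b) hεpos (hεlt a b) (hxne a b hne) (hC a).le,
      ← stick_mix_iff, ← R.seg_A a ha, ← R.seg_B b hb]
    exact (R.adj_iff a b hne).symm
  have hnoadj_AA : ∀ a ∈ A, ∀ a' ∈ A, ¬ G.Adj a a' := by
    intro a ha a' ha' hadj
    rcases hAdj a a' hadj with ⟨h1, h2⟩ | ⟨h1, h2⟩
    · exact Set.disjoint_left.mp hDisj ha' h2
    · exact Set.disjoint_left.mp hDisj ha h1
  have hnoadj_BB : ∀ b ∈ B, ∀ b' ∈ B, ¬ G.Adj b b' := by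
    intro b hb b' hb' hadj
    rcases hAdj b b' hadj with ⟨h1, h2⟩ | ⟨h1, h2⟩
    · exact Set.disjoint_left.mp hDisj h1 hb
    · exact Set.disjoint_left.mp hDisj h2 hb'
  refine ⟨⟨P, H, W, ?_, ?_, ?_, ?_, ?_⟩, ?_, ?_⟩
  · -- ht_pos
    intro v
    by_cases hv : v ∈ A
    · rw [hHA v hv]; exact hC v
    · rw [hHB v (hmemB v hv)]
      have := hC v
      have := R.len_pos v
      linarith
  · -- wd_pos
    intro v
    by_cases hv : v ∈ A
    · rw [hWA v hv]; exact R.len_pos v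
    · rw [hWB v (hmemB v hv)]; exact hδpos
  · -- p_inj
    exact R.x_inj
  · -- single
    intro u v huv
    by_cases hu : u ∈ A <;> by_cases hv : v ∈ A
    · rw [hempty_AA u hu v hv huv]; exact subsingleton_empty
    · intro q1 hq1 q2 hq2
      have h1 := hmix_sub u hu v (hmemB v hv) hq1
      have h2 := hmix_sub u hu v (hmemB v hv) hq2
      simp only [horizSeg, vertSeg, mem_inter_iff, mem_setOf_eq] at h1 h2
      exact Prod.ext (h1.2.1.trans h2.2.1.symm) (h1.1.1.trans h2.1.1.symm)
    · intro q1 hq1 q2 hq2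
      rw [Set.inter_comm] at hq1 hq2
      have h1 := hmix_sub v hv u (hmemB u hu) hq1
      have h2 := hmix_sub v hv u (hmemB u hu) hq2
      simp only [horizSeg, vertSeg, mem_inter_iff, mem_setOf_eq] at h1 h2
      exact Prod.ext (h1.2.1.trans h2.2.1.symm) (h1.1.1.trans h2.1.1.symm)
    · rw [hempty_BB u (hmemB u hu) v (hmemB v hv) huv]; exact subsingleton_empty
  · -- adj_iff
    intro u v huv
    by_cases hu : u ∈ A <;> by_cases hv : v ∈ A
    · rw [hempty_AA u hu v hv huv]
      simp only [Set.not_nonempty_empty, iff_false]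
      exact hnoadj_AA u hu v hv
    · exact (hmix_iff u hu v (hmemB v hv)).symm
    · rw [Set.inter_comm, G.adj_comm]
      exact (hmix_iff v hv u (hmemB u hu)).symm
    · rw [hempty_BB u (hmemB u hu) v (hmemB v hv) huv]
      simp only [Set.not_nonempty_empty, iff_false]
      exact hnoadj_BB u (hmemB u hu) v (hmemB v hv)
  · -- H-shapes for A
    intro a ha u hua q hq
    by_cases hu : u ∈ A
    · have : q ∈ (∅ : Set (ℝ × ℝ)) := hempty_AA u hu a ha hua ▸ hq
      exact absurd this (notMem_empty q)
    · rw [Set.inter_comm] at hq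
      exact (hmix_sub a ha u (hmemB u hu) hq).1
  · -- V-shapes for B
    intro b hb u hub q hq
    by_cases hu : u ∈ A
    · exact (hmix_sub u hu b hb hq).2
    · have : q ∈ (∅ : Set (ℝ × ℝ)) := hempty_BB u (hmemB u hu) b hb hub ▸ hq
      exact absurd this (notMem_empty q)
end

section
/- If a bipartite graph G with parts A and B has a nice grounded ⌐-representation (with respect to the parts A and B), then G has a stick representation in which the vertices of A are represented by vertical segments and the vertices of B by horizontal segments; in particular, every bipartite grounded ⌐-graph having a nice grounded ⌐-representation is a stick graph. -/
open Set

section Aux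

open Classical in
/-- `A`-vertices whose horizontal segment crosses over the anchor of `b`,
but which are not adjacent to `b`. -/
noncomputable def auxNS {V : Type*} [Fintype V] (G : SimpleGraph V) (A : Set V)
    (R : GroundedLRep G) (b : V) : Finset V :=
  Finset.univ.filter
    (fun a => a ∈ A ∧ ¬ G.Adj a b ∧ a ≠ b ∧ R.p a - R.wd a ≤ R.p b ∧ R.p b ≤ R.p a)

noncomputable def auxNR {V : Type*} [Fintype V] (G : SimpleGraph V) (A : Set V)
    (R : GroundedLRep G) (b : V) : Finset ℝ :=
  (auxNS G A R b).image (fun a => R.p a - R.p b)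

open Classical in
noncomputable def auxAR {V : Type*} [Fintype V] (G : SimpleGraph V)
    (R : GroundedLRep G) (b : V) : Finset ℝ :=
  (Finset.univ.filter (fun a => G.Adj a b)).image (fun a => R.p a - R.p b)

noncomputable def auxEps {V : Type*} [Fintype V] (G : SimpleGraph V) (A : Set V)
    (R : GroundedLRep G) (b : V) : ℝ :=
  if hN : (auxNR G A R b).Nonempty then (auxNR G A R b).min' hN / 2 else 1

noncomputable def auxLen {V : Type*} [Fintype V] (G : SimpleGraph V) (A : Set V)
    (R : GroundedLRep G) (b : V) : ℝ :=
  (insert (auxEps G A R b) (auxAR G R b)).max' (Finset.insert_nonempty _ _)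

end Aux
/-- If a bipartite graph `G` with parts `A` and `B` has a nice grounded `⌐`-representation,
then `G` has a stick representation with `A` represented by vertical segments and `B` by
horizontal segments. -/
theorem nice_grounded_L_to_stick {V : Type*} [Fintype V] (G : SimpleGraph V) (A B : Set V)
    (hbip : IsBipartitionOf G A B) (R : GroundedLRep G) (hnice : R.Nice A B) :
    Nonempty (StickRep G A B) := by
  classical
  obtain ⟨hAB, hdisj, hadj⟩ := hbip
  obtain ⟨hA, hB⟩ := hnice
  have hmemB : ∀ v : V, v ∉ A → v ∈ B := by
    intro v hv
    have h : v ∈ A ∪ B := hAB ▸ Set.mem_univ v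
    rcases h with h | h
    · exact absurd h hv
    · exact h
  have hnotAB : ∀ v, v ∈ A → v ∈ B → False := fun v h1 h2 =>
    Set.disjoint_left.mp hdisj h1 h2
  have hne : ∀ a ∈ A, ∀ b ∈ B, a ≠ b := by
    rintro a ha b hb rfl; exact hnotAB a ha hb
  have hnoAA : ∀ u ∈ A, ∀ v ∈ A, ¬ G.Adj u v := by
    intro u hu v hv h
    rcases hadj u v h with ⟨_, h2⟩ | ⟨h2, _⟩
    · exact hnotAB v hv h2
    · exact hnotAB u hu h2
  have hnoBB : ∀ u ∈ B, ∀ v ∈ B, ¬ G.Adj u v := by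
    intro u hu v hv h
    rcases hadj u v h with ⟨h2, _⟩ | ⟨_, h2⟩
    · exact hnotAB u h2 hu
    · exact hnotAB v h2 hv
  have hAofAdj : ∀ a b, b ∈ B → G.Adj a b → a ∈ A := by
    intro a b hb h
    rcases hadj a b h with ⟨h1, _⟩ | ⟨_, h2⟩
    · exact h1
    · exact absurd hb (fun hh => hnotAB b h2 hh)
  -- Key adjacency characterization from the nice representation
  have key : ∀ a ∈ A, ∀ b ∈ B, (G.Adj a b ↔
      (R.p a - R.wd a ≤ R.p b ∧ R.p b ≤ R.p a ∧ R.ht a ≤ R.ht b)) := by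
    intro a ha b hb
    have hab : a ≠ b := hne a ha b hb
    constructor
    · intro h
      obtain ⟨q, hqa, hqb⟩ := (R.adj_iff a b hab).mp h
      have h1 : q ∈ horizSeg (R.p a) (R.ht a) (R.wd a) :=
        hA a ha b hab.symm q ⟨hqb, hqa⟩
      have h2 : q ∈ vertSeg (R.p b) (R.ht b) :=
        hB b hb a hab q ⟨hqa, hqb⟩
      obtain ⟨hh2, hh1l, hh1r⟩ := h1
      obtain ⟨hv1, hv2l, hv2r⟩ := h2
      refine ⟨?_, ?_, ?_⟩ <;> linarith
    · rintro ⟨h1, h2, h3⟩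
      refine (R.adj_iff a b hab).mpr ⟨(R.p b, R.ht a), ?_, ?_⟩
      · exact Or.inr ⟨rfl, h1, h2⟩
      · exact Or.inl ⟨rfl, (R.ht_pos a).le, h3⟩
  -- Ordering lemma: adjacent `a`'s come before non-adjacent ones crossing the anchor of `b`
  have order : ∀ a ∈ A, ∀ a' ∈ A, ∀ b ∈ B, G.Adj a b →
      R.p a' - R.wd a' ≤ R.p b → R.p b ≤ R.p a' → ¬ G.Adj a' b → R.p a < R.p a' := by
    intro a ha a' ha' b hb hadj1 hi1 hi2 hnadj
    obtain ⟨k1, k2, k3⟩ := (key a ha b hb).mp hadj1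
    have hlt : R.ht b < R.ht a' := by
      by_contra hcon
      exact hnadj ((key a' ha' b hb).mpr ⟨hi1, hi2, le_of_not_gt hcon⟩)
    have haa' : a ≠ a' := by rintro rfl; exact hnadj hadj1
    by_contra hcon
    push_neg at hcon
    have hq : ((R.p a', R.ht a) ∈
        LShape (R.p a) (R.ht a) (R.wd a) ∩ LShape (R.p a') (R.ht a') (R.wd a')) :=
      ⟨Or.inr ⟨rfl, by linarith, hcon⟩, Or.inl ⟨rfl, (R.ht_pos a).le, by linarith⟩⟩
    exact hnoAA a ha a' ha' ((R.adj_iff a a' haa').mpr ⟨_, hq⟩)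
  -- positivity of elements of auxNR
  have hNRpos : ∀ b, ∀ x ∈ auxNR G A R b, 0 < x := by
    intro b x hx
    simp only [auxNR, auxNS, Finset.mem_image, Finset.mem_filter, Finset.mem_univ,
      true_and] at hx
    obtain ⟨a, ⟨-, -, hab, -, hle⟩, rfl⟩ := hx
    have hne' : R.p b ≠ R.p a := fun h => hab (R.p_inj h.symm)
    have := lt_of_le_of_ne hle hne'
    linarith
  have hARpos : ∀ b ∈ B, ∀ x ∈ auxAR G R b, 0 < x := by
    intro b hb x hx
    simp only [auxAR, Finset.mem_image, Finset.mem_filter, Finset.mem_univ, true_and] at hx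
    obtain ⟨a, hab, rfl⟩ := hx
    have ha : a ∈ A := hAofAdj a b hb hab
    obtain ⟨-, k2, -⟩ := (key a ha b hb).mp hab
    have hne' : R.p b ≠ R.p a := fun h => (hne a ha b hb) (R.p_inj h.symm)
    have := lt_of_le_of_ne k2 hne'
    linarith
  have hEpsPos : ∀ b, 0 < auxEps G A R b := by
    intro b
    unfold auxEps
    split
    · next hN => exact half_pos (hNRpos b _ (Finset.min'_mem _ hN))
    · exact one_pos
  have hLenPos : ∀ b ∈ B, 0 < auxLen G A R b := by
    intro b hb
    have hmem := Finset.max'_mem (insert (auxEps G A R b) (auxAR G R b))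
      (Finset.insert_nonempty _ _)
    rcases Finset.mem_insert.mp hmem with h | h
    · rw [auxLen, h]; exact hEpsPos b
    · exact hARpos b hb _ h
  have hLenAdj : ∀ b, ∀ a, G.Adj a b → R.p a - R.p b ≤ auxLen G A R b := by
    intro b a hab
    refine Finset.le_max' _ _ (Finset.mem_insert_of_mem ?_)
    simp only [auxAR, Finset.mem_image, Finset.mem_filter, Finset.mem_univ, true_and]
    exact ⟨a, hab, rfl⟩
  have hLenLt : ∀ b ∈ B, ∀ a ∈ A, ¬ G.Adj a b → a ≠ b →
      R.p a - R.wd a ≤ R.p b → R.p b ≤ R.p a → auxLen G A R b < R.p a - R.p b := by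
    intro b hb a ha hnadj hab hi1 hi2
    have hmemN : R.p a - R.p b ∈ auxNR G A R b := by
      simp only [auxNR, auxNS, Finset.mem_image, Finset.mem_filter, Finset.mem_univ, true_and]
      exact ⟨a, ⟨ha, hnadj, hab, hi1, hi2⟩, rfl⟩
    have hN : (auxNR G A R b).Nonempty := ⟨_, hmemN⟩
    refine (Finset.max'_lt_iff _ _).mpr ?_
    intro y hy
    rcases Finset.mem_insert.mp hy with h | h
    · subst h
      rw [auxEps, dif_pos hN]
      have h1 : (auxNR G A R b).min' hN ≤ R.p a - R.p b := Finset.min'_le _ _ hmemN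
      have h2 : 0 < (auxNR G A R b).min' hN := hNRpos b _ (Finset.min'_mem _ hN)
      linarith
    · simp only [auxAR, Finset.mem_image, Finset.mem_filter, Finset.mem_univ, true_and] at h
      obtain ⟨a'', hadj'', rfl⟩ := h
      have ha'' : a'' ∈ A := hAofAdj a'' b hb hadj''
      have := order a'' ha'' a ha b hb hadj'' hi1 hi2 hnadj
      linarith
  -- the main intersection characterization for the stick segments
  have main : ∀ a ∈ A, ∀ b ∈ B, (G.Adj a b ↔
      (stickVSeg (R.p a) (R.wd a) ∩ stickHSeg (R.p b) (auxLen G A R b)).Nonempty) := by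
    intro a ha b hb
    constructor
    · intro h
      obtain ⟨k1, k2, k3⟩ := (key a ha b hb).mp h
      have hlen := hLenAdj b a h
      refine ⟨(R.p a, -R.p b), ⟨rfl, ?_, ?_⟩, ⟨rfl, ?_, ?_⟩⟩
      · show -R.p a ≤ -R.p b; linarith
      · show -R.p b ≤ -R.p a + R.wd a; linarith
      · show R.p b ≤ R.p a; linarith
      · show R.p a ≤ R.p b + auxLen G A R b; linarith
    · rintro ⟨q, ⟨hq1, hv1, hv2⟩, ⟨hq2, hh1, hh2⟩⟩
      by_contra hnadj
      have hab : a ≠ b := hne a ha b hb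
      have := hLenLt b hb a ha hnadj hab (by linarith) (by linarith)
      linarith
  -- assemble the stick representation
  refine ⟨⟨R.p, fun v => if v ∈ A then R.wd v else auxLen G A R v, ?_, R.p_inj,
    fun v => if v ∈ A then stickVSeg (R.p v) (R.wd v)
      else stickHSeg (R.p v) (auxLen G A R v), ?_, ?_, ?_, ?_⟩⟩
  · intro v
    by_cases hv : v ∈ A
    · simpa [hv] using R.wd_pos v
    · simpa [hv] using hLenPos v (hmemB v hv)
  · intro a ha
    simp [ha]
  · intro b hb
    have hbA : b ∉ A := fun h => hnotAB b h hb
    simp [hbA]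
  · intro u v huv
    by_cases hu : u ∈ A <;> by_cases hv : v ∈ A <;>
      simp only [if_pos, if_neg, hu, hv, if_true, if_false] <;>
      intro q hq q' hq'
    · exact absurd (R.p_inj (hq.1.1.symm.trans hq.2.1)) huv
    · obtain ⟨⟨e1, -, -⟩, ⟨e2, -, -⟩⟩ := hq
      obtain ⟨⟨e1', -, -⟩, ⟨e2', -, -⟩⟩ := hq'
      exact Prod.ext (e1.trans e1'.symm) (e2.trans e2'.symm)
    · obtain ⟨⟨e2, -, -⟩, ⟨e1, -, -⟩⟩ := hq
      obtain ⟨⟨e2', -, -⟩, ⟨e1', -, -⟩⟩ := hq'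
      exact Prod.ext (e1.trans e1'.symm) (e2.trans e2'.symm)
    · have : R.p u = R.p v := neg_injective (hq.1.1.symm.trans hq.2.1)
      exact absurd (R.p_inj this) huv
  · intro u v huv
    by_cases hu : u ∈ A <;> by_cases hv : v ∈ A <;>
      simp only [if_pos, if_neg, hu, hv, if_true, if_false]
    · constructor
      · intro h; exact absurd h (hnoAA u hu v hv)
      · rintro ⟨q, ⟨e1, -, -⟩, ⟨e2, -, -⟩⟩
        exact absurd (R.p_inj (e1.symm.trans e2)) huv
    · exact main u hu v (hmemB v hv)
    · rw [G.adj_comm, Set.inter_comm]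
      exact main v hv u (hmemB u hu)
    · constructor
      · intro h; exact absurd h (hnoBB u (hmemB u hu) v (hmemB v hv))
      · rintro ⟨q, ⟨e1, -, -⟩, ⟨e2, -, -⟩⟩
        have : R.p u = R.p v := neg_injective (e1.symm.trans e2)
        exact absurd (R.p_inj this) huv
end

section
/- If a bipartite graph G with parts A and B has a nice grounded ⌐-representation, then G has a grounded ⌐-representation in which every anchor x-coordinate is positive and, for every a ∈ A, the height h(a) of the shape S(a) equals its anchor x-coordinate p(a). -/
open Set

section Aux
attribute [local instance] Classical.propDecidable

open Finset in
/-- Shift constant making all anchors at least 1. -/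
noncomputable def auxC {V : Type*} [Fintype V] {G : SimpleGraph V} (R : GroundedLRep G) : ℝ :=
  1 + ∑ v, |R.p v|

/-- Shifted anchors. -/
noncomputable def auxP {V : Type*} [Fintype V] {G : SimpleGraph V} (R : GroundedLRep G)
    (v : V) : ℝ := R.p v + auxC R

/-- A positive lower bound (at most 1) for distances between distinct anchors. -/
noncomputable def auxG {V : Type*} [Fintype V] {G : SimpleGraph V} (R : GroundedLRep G) : ℝ :=
  (insert 1 (((Finset.univ ×ˢ Finset.univ : Finset (V × V)).filter
    (fun uv => uv.1 ≠ uv.2)).image (fun uv => |R.p uv.1 - R.p uv.2|))).min'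
    (Finset.insert_nonempty _ _)

open Classical in
/-- Max of shifted anchors of `A`-neighbours of `b` (and `0`). -/
noncomputable def auxM {V : Type*} [Fintype V] {G : SimpleGraph V} (R : GroundedLRep G)
    (A : Set V) (b : V) : ℝ :=
  (insert 0 ((Finset.univ.filter (fun a => a ∈ A ∧ G.Adj a b)).image
    (fun a => auxP R a))).max' (Finset.insert_nonempty _ _)

lemma auxP_ge_one {V : Type*} [Fintype V] {G : SimpleGraph V} (R : GroundedLRep G) (v : V) :
    1 ≤ auxP R v := by
  have h1 : |R.p v| ≤ ∑ u, |R.p u| :=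
    Finset.single_le_sum (f := fun u => |R.p u|) (fun i _ => abs_nonneg _) (Finset.mem_univ v)
  have h2 := neg_abs_le (R.p v)
  simp only [auxP, auxC]
  linarith

lemma auxG_pos {V : Type*} [Fintype V] {G : SimpleGraph V} (R : GroundedLRep G) :
    0 < auxG R := by
  have hm := Finset.min'_mem _ (Finset.insert_nonempty 1
    (((Finset.univ ×ˢ Finset.univ : Finset (V × V)).filter
      (fun uv => uv.1 ≠ uv.2)).image (fun uv => |R.p uv.1 - R.p uv.2|)))
  rcases Finset.mem_insert.mp hm with h | h
  · rw [auxG, h]; norm_num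
  · obtain ⟨uv, huv, heq⟩ := Finset.mem_image.mp h
    have hne : uv.1 ≠ uv.2 := (Finset.mem_filter.mp huv).2
    rw [auxG, ← heq]
    exact abs_pos.mpr (sub_ne_zero.mpr (fun hc => hne (R.p_inj hc)))

lemma auxG_le_one {V : Type*} [Fintype V] {G : SimpleGraph V} (R : GroundedLRep G) :
    auxG R ≤ 1 :=
  Finset.min'_le _ 1 (Finset.mem_insert_self _ _)

lemma auxG_le {V : Type*} [Fintype V] {G : SimpleGraph V} (R : GroundedLRep G)
    {u v : V} (h : u ≠ v) : auxG R ≤ |R.p u - R.p v| := by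
  refine Finset.min'_le _ _ (Finset.mem_insert_of_mem (Finset.mem_image.mpr
    ⟨(u, v), Finset.mem_filter.mpr ⟨by simp, h⟩, rfl⟩))

lemma auxM_nonneg {V : Type*} [Fintype V] {G : SimpleGraph V} (R : GroundedLRep G)
    (A : Set V) (b : V) : 0 ≤ auxM R A b :=
  Finset.le_max' _ 0 (Finset.mem_insert_self _ _)

open Classical in
lemma le_auxM {V : Type*} [Fintype V] {G : SimpleGraph V} (R : GroundedLRep G)
    (A : Set V) {a b : V} (ha : a ∈ A) (hadj : G.Adj a b) : auxP R a ≤ auxM R A b := by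
  classical
  refine Finset.le_max' _ _ (Finset.mem_insert_of_mem (Finset.mem_image.mpr
    ⟨a, Finset.mem_filter.mpr ⟨Finset.mem_univ a, ?_, ?_⟩, rfl⟩)) <;> first | exact ha | exact hadj

open Classical in
/-- If `auxM R A b < auxP R a`, there is a gap of at least `auxG R`. -/
lemma auxM_gap {V : Type*} [Fintype V] {G : SimpleGraph V} (R : GroundedLRep G)
    (A : Set V) (a b : V) (h : auxM R A b < auxP R a) :
    auxM R A b + auxG R / 2 < auxP R a := by
  have hg := auxG_pos R
  have hg1 := auxG_le_one R
  have hmem : auxM R A b ∈ insert (0:ℝ)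
      ((Finset.univ.filter (fun a => a ∈ A ∧ G.Adj a b)).image (fun a => auxP R a)) :=
    Finset.max'_mem _ _
  rcases Finset.mem_insert.mp hmem with h0 | himg
  · have := auxP_ge_one R a
    rw [h0]
    linarith
  · obtain ⟨a1, _, heq⟩ := Finset.mem_image.mp himg
    rw [← heq] at h ⊢
    have hne : a1 ≠ a := by
      intro hc; rw [hc] at h; exact lt_irrefl _ h
    have hle := auxG_le R hne
    have hlt : R.p a1 < R.p a := by
      simpa [auxP] using h
    rw [abs_of_nonpos (by linarith)] at hle
    simp only [auxP] at *
    linarith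

lemma auxM_lt {V : Type*} [Fintype V] {G : SimpleGraph V} (R : GroundedLRep G)
    (A : Set V) {b : V} {x : ℝ} (h0 : 0 < x)
    (h : ∀ a ∈ A, G.Adj a b → auxP R a < x) : auxM R A b < x := by
  refine (Finset.max'_lt_iff _ _).mpr ?_
  intro y hy
  rcases Finset.mem_insert.mp hy with rfl | hy
  · exact h0
  · obtain ⟨a, ha, rfl⟩ := Finset.mem_image.mp hy
    obtain ⟨-, haA, hadj⟩ := Finset.mem_filter.mp ha
    exact h a haA hadj

end Aux

/-- If a bipartite graph `G` with parts `A` and `B` has a nice grounded `⌐`-representation,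
then `G` has a grounded `⌐`-representation in which every anchor x-coordinate is positive and,
for every `a ∈ A`, the height of `S(a)` equals its anchor x-coordinate. -/
theorem nice_grounded_L_heights_eq_anchors {V : Type*} [Fintype V] (G : SimpleGraph V)
    (A B : Set V) (hbip : IsBipartitionOf G A B) (R : GroundedLRep G) (hnice : R.Nice A B) :
    ∃ R' : GroundedLRep G, (∀ v, 0 < R'.p v) ∧ ∀ a ∈ A, R'.ht a = R'.p a := by
  classical
  obtain ⟨hABu, hdisj, hbipadj⟩ := hbip
  have hmem : ∀ v : V, v ∈ A ∨ v ∈ B := by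
    intro v
    have hv : v ∈ A ∪ B := by rw [hABu]; exact Set.mem_univ v
    exact hv
  have hnotBoth : ∀ v : V, v ∈ A → v ∈ B → False := fun v ha hb =>
    Set.disjoint_left.mp hdisj ha hb
  have hneAB : ∀ a ∈ A, ∀ b ∈ B, a ≠ b := fun a ha b hb h =>
    hnotBoth a ha (h ▸ hb)
  have hAAnadj : ∀ a1 ∈ A, ∀ a2 ∈ A, ¬ G.Adj a1 a2 := by
    intro a1 h1 a2 h2 h
    rcases hbipadj a1 a2 h with ⟨_, hb⟩ | ⟨hb, _⟩
    · exact hnotBoth a2 h2 hb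
    · exact hnotBoth a1 h1 hb
  have hBBnadj : ∀ b1 ∈ B, ∀ b2 ∈ B, ¬ G.Adj b1 b2 := by
    intro b1 h1 b2 h2 h
    rcases hbipadj b1 b2 h with ⟨hb, _⟩ | ⟨_, hb⟩
    · exact hnotBoth b1 hb h1
    · exact hnotBoth b2 hb h2
  -- characterization of adjacency in the original representation
  have horig : ∀ a ∈ A, ∀ b ∈ B,
      (G.Adj a b ↔ (R.p a - R.wd a ≤ R.p b ∧ R.p b ≤ R.p a ∧ R.ht a ≤ R.ht b)) := by
    intro a ha b hb
    have hab := hneAB a ha b hb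
    constructor
    · intro hAdj
      obtain ⟨q, hqa, hqb⟩ := (R.adj_iff a b hab).mp hAdj
      have hH : q ∈ horizSeg (R.p a) (R.ht a) (R.wd a) :=
        hnice.1 a ha b (Ne.symm hab) q ⟨hqb, hqa⟩
      have hV : q ∈ vertSeg (R.p b) (R.ht b) :=
        hnice.2 b hb a hab q ⟨hqa, hqb⟩
      obtain ⟨e1, e2, e3⟩ := hH
      obtain ⟨f1, f2, f3⟩ := hV
      rw [f1] at e2 e3
      rw [e1] at f3
      exact ⟨e2, e3, f3⟩
    · rintro ⟨h1, h2, h3⟩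
      refine (R.adj_iff a b hab).mpr ⟨(R.p b, R.ht a), ?_, ?_⟩
      · exact Or.inr ⟨rfl, h1, h2⟩
      · exact Or.inl ⟨rfl, le_of_lt (R.ht_pos a), h3⟩
  -- key ordering lemma
  have hkey : ∀ a1 ∈ A, ∀ a2 ∈ A, ∀ b ∈ B, G.Adj a1 b →
      R.p a2 - R.wd a2 ≤ R.p b → R.p b ≤ R.p a2 → ¬ G.Adj a2 b → R.p a1 < R.p a2 := by
    intro a1 h1 a2 h2 b hb hadj1 hi1 hi2 hnadj
    have hne12 : a1 ≠ a2 := by rintro rfl; exact hnadj hadj1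
    have hhtb : R.ht b < R.ht a2 := by
      by_contra hcon
      push_neg at hcon
      exact hnadj ((horig a2 h2 b hb).mpr ⟨hi1, hi2, hcon⟩)
    obtain ⟨hj1, hj2, hj3⟩ := (horig a1 h1 b hb).mp hadj1
    by_contra hle
    push_neg at hle
    have hlt : R.p a2 < R.p a1 :=
      lt_of_le_of_ne hle (fun hc => hne12 (R.p_inj hc.symm))
    have hadj12 : G.Adj a1 a2 := by
      refine (R.adj_iff a1 a2 hne12).mpr ⟨(R.p a2, R.ht a1), ?_, ?_⟩
      · exact Or.inr ⟨rfl, by linarith, le_of_lt hlt⟩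
      · exact Or.inl ⟨rfl, le_of_lt (R.ht_pos a1), by linarith⟩
    exact hAAnadj a1 h1 a2 h2 hadj12
  -- constants
  have hg := auxG_pos R
  have hg1 := auxG_le_one R
  have hP1 : ∀ v, (1:ℝ) ≤ auxP R v := auxP_ge_one R
  have hPdef : ∀ v, auxP R v = R.p v + auxC R := fun v => rfl
  have hPinj : ∀ u v : V, u ≠ v → auxP R u ≠ auxP R v := by
    intro u v huv hc
    refine huv (R.p_inj ?_)
    simp only [auxP] at hc
    linarith
  -- heights of B shapes never coincide with heights of A shapes
  have hht_ne : ∀ b a : V, auxM R A b + auxG R / 2 ≠ auxP R a := by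
    intro b a
    rcases le_or_gt (auxP R a) (auxM R A b) with h | h
    · intro hc; linarith
    · have := auxM_gap R A a b h
      intro hc; linarith
  -- strict bound for non-adjacent crossing pairs
  have hlt_nadj : ∀ a ∈ A, ∀ b ∈ B, ¬ G.Adj a b →
      R.p a - R.wd a ≤ R.p b → R.p b ≤ R.p a →
      auxM R A b + auxG R / 2 < auxP R a := by
    intro a ha b hb hnadj hi1 hi2
    have hmlt : auxM R A b < auxP R a := by
      refine auxM_lt R A (by linarith [hP1 a]) ?_
      intro a1 ha1A ha1adj
      have := hkey a1 ha1A a ha b hb ha1adj hi1 hi2 hnadj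
      simp only [auxP]
      linarith
    exact auxM_gap R A a b hmlt
  -- intersection of an A-shape with a B-shape
  have hABsub : ∀ a ∈ A, ∀ b ∈ B, ∀ q ∈ LShape (auxP R a) (auxP R a) (R.wd a) ∩
      LShape (auxP R b) (auxM R A b + auxG R / 2) (auxG R / 2),
      q = (auxP R b, auxP R a) ∧ R.p a - R.wd a ≤ R.p b ∧ R.p b ≤ R.p a ∧
        auxP R a ≤ auxM R A b + auxG R / 2 := by
    intro a ha b hb q hq
    simp only [LShape, Set.mem_inter_iff, Set.mem_union, vertSeg, horizSeg,
      Set.mem_setOf_eq] at hq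
    obtain ⟨hqa | hqa, hqb | hqb⟩ := hq
    · -- vert ∩ vert : impossible
      obtain ⟨e1, -, -⟩ := hqa
      obtain ⟨f1, -, -⟩ := hqb
      exact absurd (by rw [← e1, f1]) (hPinj a b (hneAB a ha b hb))
    · -- vert of a ∩ horiz of b : impossible since anchors are g-separated
      obtain ⟨e1, e2, e3⟩ := hqa
      obtain ⟨f1, f2, f3⟩ := hqb
      exfalso
      have hab := hneAB a ha b hb
      have hle := auxG_le R hab
      rw [e1] at f2 f3
      have h3 : R.p a ≤ R.p b := by simp only [auxP] at f3; linarith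
      rw [abs_of_nonpos (by linarith)] at hle
      simp only [auxP] at f2 f3
      linarith
    · -- horiz of a ∩ vert of b : the single intersection point
      obtain ⟨e1, e2, e3⟩ := hqa
      obtain ⟨f1, f2, f3⟩ := hqb
      rw [f1] at e2 e3
      rw [e1] at f3
      refine ⟨Prod.ext f1 e1, ?_, ?_, f3⟩
      · simp only [auxP] at e2; linarith
      · simp only [auxP] at e3; linarith
    · -- horiz ∩ horiz : impossible since heights differ
      obtain ⟨e1, -, -⟩ := hqa
      obtain ⟨f1, -, -⟩ := hqb
      exact absurd (by rw [← f1, e1]) (hht_ne b a)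
  -- two A-shapes are disjoint
  have hAAempty : ∀ a1 ∈ A, ∀ a2 ∈ A, a1 ≠ a2 → ∀ q,
      q ∈ LShape (auxP R a1) (auxP R a1) (R.wd a1) ∩
        LShape (auxP R a2) (auxP R a2) (R.wd a2) → False := by
    intro a1 h1 a2 h2 hne q hq
    have hpp := hPinj a1 a2 hne
    simp only [LShape, Set.mem_inter_iff, Set.mem_union, vertSeg, horizSeg,
      Set.mem_setOf_eq] at hq
    obtain ⟨hqa | hqa, hqb | hqb⟩ := hq
    · exact hpp (by rw [← hqa.1, hqb.1])
    · obtain ⟨e1, e2, e3⟩ := hqa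
      obtain ⟨f1, f2, f3⟩ := hqb
      refine hpp (le_antisymm ?_ ?_)
      · rw [← e1]; exact f3
      · rw [← f1]; exact e3
    · obtain ⟨e1, e2, e3⟩ := hqa
      obtain ⟨f1, f2, f3⟩ := hqb
      rw [e1] at f3
      rw [f1] at e3
      exact hpp (le_antisymm f3 e3)
    · exact hpp (by rw [← hqa.1, hqb.1])
  -- two B-shapes are disjoint
  have hBBempty : ∀ b1 ∈ B, ∀ b2 ∈ B, b1 ≠ b2 → ∀ q,
      q ∈ LShape (auxP R b1) (auxM R A b1 + auxG R / 2) (auxG R / 2) ∩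
        LShape (auxP R b2) (auxM R A b2 + auxG R / 2) (auxG R / 2) → False := by
    intro b1 h1 b2 h2 hne q hq
    have hle := auxG_le R hne
    simp only [LShape, Set.mem_inter_iff, Set.mem_union, vertSeg, horizSeg,
      Set.mem_setOf_eq] at hq
    obtain ⟨hqa | hqa, hqb | hqb⟩ := hq
    · exact hPinj b1 b2 hne (by rw [← hqa.1, hqb.1])
    · obtain ⟨e1, -, -⟩ := hqa
      obtain ⟨-, f2, f3⟩ := hqb
      rw [e1] at f2 f3
      have h1 : |R.p b1 - R.p b2| ≤ auxG R / 2 := by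
        rw [abs_le]
        simp only [auxP] at f2 f3
        constructor <;> linarith
      linarith
    · obtain ⟨-, e2, e3⟩ := hqa
      obtain ⟨f1, -, -⟩ := hqb
      rw [f1] at e2 e3
      have h1 : |R.p b1 - R.p b2| ≤ auxG R / 2 := by
        rw [abs_le]
        simp only [auxP] at e2 e3
        constructor <;> linarith
      linarith
    · obtain ⟨-, e2, e3⟩ := hqa
      obtain ⟨-, f2, f3⟩ := hqb
      have h1 : |R.p b1 - R.p b2| ≤ auxG R / 2 := by
        rw [abs_le]
        simp only [auxP] at e2 e3 f2 f3
        constructor <;> linarith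
      linarith
  -- adjacency characterization for the new shapes
  have hABadj : ∀ a ∈ A, ∀ b ∈ B, (G.Adj a b ↔
      (LShape (auxP R a) (auxP R a) (R.wd a) ∩
        LShape (auxP R b) (auxM R A b + auxG R / 2) (auxG R / 2)).Nonempty) := by
    intro a ha b hb
    constructor
    · intro hAdj
      obtain ⟨h1, h2, h3⟩ := (horig a ha b hb).mp hAdj
      refine ⟨(auxP R b, auxP R a), ?_, ?_⟩
      · refine Or.inr ⟨rfl, ?_, ?_⟩
        · simp only [auxP]; linarith
        · simp only [auxP]; linarith
      · refine Or.inl ⟨rfl, by linarith [hP1 a], ?_⟩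
        have := le_auxM R A ha hAdj
        linarith
    · rintro ⟨q, hq⟩
      obtain ⟨-, hi1, hi2, hi3⟩ := hABsub a ha b hb q hq
      by_contra hnadj
      have := hlt_nadj a ha b hb hnadj hi1 hi2
      linarith
  refine ⟨⟨auxP R, fun v => if v ∈ A then auxP R v else auxM R A v + auxG R / 2,
      fun v => if v ∈ A then R.wd v else auxG R / 2, ?_, ?_, ?_, ?_, ?_⟩, ?_, ?_⟩
  · -- ht_pos
    intro v
    split_ifs with hv
    · linarith [hP1 v]
    · linarith [auxM_nonneg R A v]
  · -- wd_pos
    intro v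
    split_ifs with hv
    · exact R.wd_pos v
    · linarith
  · -- p_inj
    intro u v h
    by_contra hne
    exact hPinj u v hne h
  · -- single
    intro u v huv
    rcases hmem u with hu | hu <;> rcases hmem v with hv | hv
    · simp only [if_pos hu, if_pos hv]
      intro q hq q' hq'
      exact (hAAempty u hu v hv huv q hq).elim
    · simp only [if_pos hu, if_neg (fun h => hnotBoth v h hv)]
      intro q hq q' hq'
      rw [(hABsub u hu v hv q hq).1, (hABsub u hu v hv q' hq').1]
    · simp only [if_pos hv, if_neg (fun h => hnotBoth u h hu)]
      intro q hq q' hq'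
      rw [(hABsub v hv u hu q ⟨hq.2, hq.1⟩).1, (hABsub v hv u hu q' ⟨hq'.2, hq'.1⟩).1]
    · simp only [if_neg (fun h => hnotBoth u h hu), if_neg (fun h => hnotBoth v h hv)]
      intro q hq q' hq'
      exact (hBBempty u hu v hv huv q hq).elim
  · -- adj_iff
    intro u v huv
    rcases hmem u with hu | hu <;> rcases hmem v with hv | hv
    · simp only [if_pos hu, if_pos hv]
      constructor
      · intro h; exact (hAAnadj u hu v hv h).elim
      · rintro ⟨q, hq⟩; exact (hAAempty u hu v hv huv q hq).elim
    · simp only [if_pos hu, if_neg (fun h => hnotBoth v h hv)]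
      exact hABadj u hu v hv
    · simp only [if_pos hv, if_neg (fun h => hnotBoth u h hu)]
      rw [SimpleGraph.adj_comm, Set.inter_comm]
      exact hABadj v hv u hu
    · simp only [if_neg (fun h => hnotBoth u h hu), if_neg (fun h => hnotBoth v h hv)]
      constructor
      · intro h; exact (hBBnadj u hu v hv h).elim
      · rintro ⟨q, hq⟩; exact (hBBempty u hu v hv huv q hq).elim
  · -- positivity of anchors
    intro v
    exact lt_of_lt_of_le one_pos (hP1 v)
  · -- heights on A
    intro a ha
    exact if_pos ha
end

section
/- A simple graph G is a stabbable grid intersection graph if and only if G has a grid intersection representation such that the line y = x intersects every segment of the representation, every segment meets this line in a point (r,r) with r an integer, and every intersection point of two distinct segments of the representation has integer coordinates. -/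
open Set

/-- An axis-parallel closed segment: horizontal (`horiz = true`) with y-coordinate `c` and
x-range `[lo, hi]`, or vertical (`horiz = false`) with x-coordinate `c` and y-range `[lo, hi]`. -/
def gridSeg (horiz : Bool) (c lo hi : ℝ) : Set (ℝ × ℝ) :=
  if horiz then {q | q.2 = c ∧ lo ≤ q.1 ∧ q.1 ≤ hi}
  else {q | q.1 = c ∧ lo ≤ q.2 ∧ q.2 ≤ hi}

/-- A grid intersection representation of a simple graph `G`: each vertex gets a
non-degenerate axis-parallel closed segment, segments of the same orientation are disjoint,
and two distinct vertices are adjacent iff their segments intersect. -/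
structure GridRep {V : Type*} (G : SimpleGraph V) where
  horiz : V → Bool
  c : V → ℝ
  lo : V → ℝ
  hi : V → ℝ
  lo_lt_hi : ∀ v, lo v < hi v
  same_disjoint : ∀ u v : V, u ≠ v → horiz u = horiz v →
    gridSeg (horiz u) (c u) (lo u) (hi u) ∩ gridSeg (horiz v) (c v) (lo v) (hi v) = ∅
  adj_iff : ∀ u v : V, u ≠ v →
    (G.Adj u v ↔
      (gridSeg (horiz u) (c u) (lo u) (hi u) ∩ gridSeg (horiz v) (c v) (lo v) (hi v)).Nonempty)

/-- The segment assigned to vertex `v` by a grid intersection representation. -/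
def GridRep.seg {V : Type*} {G : SimpleGraph V} (R : GridRep G) (v : V) : Set (ℝ × ℝ) :=
  gridSeg (R.horiz v) (R.c v) (R.lo v) (R.hi v)

/-- A simple graph is a stabbable grid intersection graph if it has a grid intersection
representation in which some straight line (with equation `a*x + b*y = k`, `(a,b) ≠ (0,0)`)
meets every segment. -/
def IsStabGIG {V : Type*} (G : SimpleGraph V) : Prop :=
  ∃ R : GridRep G, ∃ a b k : ℝ, (a ≠ 0 ∨ b ≠ 0) ∧
    ∀ v : V, ∃ q ∈ R.seg v, a * q.1 + b * q.2 = k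

/-!
If the stabbing line is oblique, write it as `y = γ x + δ`; pulling the representation back
along `(x, y) ↦ (x, γ y + δ)` turns the line into the diagonal. If it is vertical, all vertical
segments lie on it and are pairwise disjoint, so each can be moved to `x = lo` once the horizontal
segments are stretched to cross all of them; a horizontal line is the transposed case. Once every
segment contains its diagonal point `(c, c)`, only the relative order of the finitely many
coordinates matters, so replacing each coordinate by its rank makes all of them integers, and a
crossing of two segments is then a point `(c v, c u)` with integer coordinates.
-/

open Function

lemma gridSeg_true (c lo hi : ℝ) : gridSeg true c lo hi = Icc lo hi ×ˢ {c} := by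
  ext q; simp [gridSeg, and_comm]

lemma gridSeg_false (c lo hi : ℝ) : gridSeg false c lo hi = {c} ×ˢ Icc lo hi := by
  ext q; simp [gridSeg]

lemma mk_self_mem_gridSeg_iff {b : Bool} {c lo hi x : ℝ} :
    (x, x) ∈ gridSeg b c lo hi ↔ x = c ∧ x ∈ Icc lo hi := by
  cases b <;> simp [gridSeg]

lemma gridSeg_inter_gridSeg_nonempty_iff {b : Bool} {c lo hi c' lo' hi' : ℝ}
    (h : lo ≤ hi) (h' : lo' ≤ hi') :
    (gridSeg b c lo hi ∩ gridSeg b c' lo' hi').Nonempty ↔ c = c' ∧ lo ≤ hi' ∧ lo' ≤ hi := by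
  cases b <;>
  simp [gridSeg_true, gridSeg_false, prod_inter_prod, prod_nonempty_iff, Icc_inter_Icc, h, h',
    eq_comm] <;> tauto

lemma gridSeg_inter_gridSeg_nonempty_iff_of_ne {b b' : Bool} {c lo hi c' lo' hi' : ℝ}
    (hb : b ≠ b') :
    (gridSeg b c lo hi ∩ gridSeg b' c' lo' hi').Nonempty ↔ c' ∈ Icc lo hi ∧ c ∈ Icc lo' hi' := by
  cases b <;> cases b' <;>
    simp_all [gridSeg_true, gridSeg_false, prod_inter_prod, prod_nonempty_iff, and_comm]

lemma gridSeg_not (b : Bool) (c lo hi : ℝ) :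
    gridSeg (!b) c lo hi = Prod.swap ⁻¹' gridSeg b c lo hi := by
  cases b <;> rfl

lemma Set.Finite.strictMonoOn_ncard_inter_Iio {α : Type*} [LinearOrder α] {s : Set α}
    (hs : s.Finite) : StrictMonoOn (fun x => (s ∩ Iio x).ncard) s := by
  intro x hx y _ hxy
  refine ncard_lt_ncard ⟨inter_subset_inter_right _ (Iio_subset_Iio hxy.le), fun h => ?_⟩
    (hs.inter_of_left _)
  exact (lt_irrefl x (h ⟨hx, hxy⟩).2)

lemma preimage_affine_uIcc {γ : ℝ} (hγ : γ ≠ 0) (δ lo hi : ℝ) :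
    (γ * · + δ) ⁻¹' uIcc lo hi = uIcc ((lo - δ) / γ) ((hi - δ) / γ) := by
  rw [show (γ * · + δ) = (· + δ) ∘ (γ * ·) from rfl, preimage_comp,
    preimage_add_const_uIcc, preimage_const_mul_uIcc hγ]

lemma affine_surjective {γ : ℝ} (hγ : γ ≠ 0) (δ : ℝ) : Surjective (γ * · + δ) :=
  fun y => ⟨(y - δ) / γ, by field_simp; ring⟩

lemma preimage_affineY_gridSeg_true {γ : ℝ} (hγ : γ ≠ 0) (δ c lo hi : ℝ) :
    Prod.map id (γ * · + δ) ⁻¹' gridSeg true c lo hi = gridSeg true ((c - δ) / γ) lo hi := by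
  rw [gridSeg_true, gridSeg_true, preimage_prod_map_prod, preimage_id, ← uIcc_self,
    preimage_affine_uIcc hγ, uIcc_self]

lemma preimage_affineY_gridSeg_false {γ : ℝ} (hγ : γ ≠ 0) (δ c : ℝ) {lo hi : ℝ} (h : lo ≤ hi) :
    Prod.map id (γ * · + δ) ⁻¹' gridSeg false c lo hi =
      gridSeg false c (min ((lo - δ) / γ) ((hi - δ) / γ)) (max ((lo - δ) / γ) ((hi - δ) / γ)) := by
  rw [gridSeg_false, gridSeg_false, preimage_prod_map_prod, preimage_id, ← uIcc_of_le h,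
    preimage_affine_uIcc hγ, Icc_min_max]

namespace GridRep

variable {V : Type*} {G : SimpleGraph V}

@[simps]
def reshape (R : GridRep G) (horiz : V → Bool) (c lo hi : V → ℝ) (hlt : ∀ v, lo v < hi v)
    (hhoriz : ∀ u v, horiz u = horiz v → R.horiz u = R.horiz v)
    (hinter : ∀ u v, u ≠ v → ((gridSeg (horiz u) (c u) (lo u) (hi u) ∩
      gridSeg (horiz v) (c v) (lo v) (hi v)).Nonempty ↔ (R.seg u ∩ R.seg v).Nonempty)) :
    GridRep G where
  horiz := horiz
  c := c
  lo := lo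
  hi := hi
  lo_lt_hi := hlt
  same_disjoint u v huv he := by
    rw [← not_nonempty_iff_eq_empty, hinter u v huv, not_nonempty_iff_eq_empty]
    exact R.same_disjoint u v huv (hhoriz u v he)
  adj_iff u v huv := (R.adj_iff u v huv).trans (hinter u v huv).symm

def pullback (R : GridRep G) (Φ : ℝ × ℝ → ℝ × ℝ) (hΦ : Surjective Φ) (horiz : V → Bool)
    (c lo hi : V → ℝ) (hlt : ∀ v, lo v < hi v)
    (hhoriz : ∀ u v, horiz u = horiz v → R.horiz u = R.horiz v)
    (hseg : ∀ v, gridSeg (horiz v) (c v) (lo v) (hi v) = Φ ⁻¹' R.seg v) : GridRep G :=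
  R.reshape horiz c lo hi hlt hhoriz fun u v _ => by
    rw [hseg, hseg, ← preimage_inter, hΦ.nonempty_preimage]

lemma seg_pullback (R : GridRep G) (Φ : ℝ × ℝ → ℝ × ℝ) (hΦ : Surjective Φ) (horiz : V → Bool)
    (c lo hi : V → ℝ) (hlt : ∀ v, lo v < hi v)
    (hhoriz : ∀ u v, horiz u = horiz v → R.horiz u = R.horiz v)
    (hseg : ∀ v, gridSeg (horiz v) (c v) (lo v) (hi v) = Φ ⁻¹' R.seg v) (v : V) :
    (R.pullback Φ hΦ horiz c lo hi hlt hhoriz hseg).seg v = Φ ⁻¹' R.seg v :=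
  hseg v

def transpose (R : GridRep G) : GridRep G :=
  R.pullback Prod.swap Prod.swap_surjective (fun v => !R.horiz v) R.c R.lo R.hi R.lo_lt_hi
    (fun _ _ => Bool.not_inj) fun _ => gridSeg_not ..

lemma seg_transpose (R : GridRep G) (v : V) : R.transpose.seg v = Prod.swap ⁻¹' R.seg v :=
  R.seg_pullback ..

noncomputable def affineY (R : GridRep G) {γ : ℝ} (hγ : γ ≠ 0) (δ : ℝ) : GridRep G :=
  R.pullback (Prod.map id (γ * · + δ)) (surjective_id.prodMap (affine_surjective hγ δ)) R.horiz
    (fun v => bif R.horiz v then (R.c v - δ) / γ else R.c v)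
    (fun v => bif R.horiz v then R.lo v else min ((R.lo v - δ) / γ) ((R.hi v - δ) / γ))
    (fun v => bif R.horiz v then R.hi v else max ((R.lo v - δ) / γ) ((R.hi v - δ) / γ))
    (fun v => by
      cases R.horiz v
      · simpa [min_lt_max, sub_left_inj, hγ] using (R.lo_lt_hi v).ne'
      · exact R.lo_lt_hi v)
    (fun _ _ => id) fun v => by
      rw [seg]
      cases R.horiz v
      · exact (preimage_affineY_gridSeg_false hγ δ _ (R.lo_lt_hi v).le).symm
      · exact (preimage_affineY_gridSeg_true hγ δ _ _ _).symm

lemma seg_affineY (R : GridRep G) {γ : ℝ} (hγ : γ ≠ 0) (δ : ℝ) (v : V) :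
    (R.affineY hγ δ).seg v = Prod.map id (γ * · + δ) ⁻¹' R.seg v :=
  R.seg_pullback ..

def coords (R : GridRep G) : Set ℝ := range R.c ∪ range R.lo ∪ range R.hi

lemma c_mem_coords (R : GridRep G) (v : V) : R.c v ∈ R.coords := .inl (.inl ⟨v, rfl⟩)

lemma lo_mem_coords (R : GridRep G) (v : V) : R.lo v ∈ R.coords := .inl (.inr ⟨v, rfl⟩)

lemma hi_mem_coords (R : GridRep G) (v : V) : R.hi v ∈ R.coords := .inr ⟨v, rfl⟩

lemma finite_coords [Finite V] (R : GridRep G) : R.coords.Finite :=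
  ((finite_range _).union (finite_range _)).union (finite_range _)

def relabel (R : GridRep G) (f : ℝ → ℝ) (hf : StrictMonoOn f R.coords) : GridRep G :=
  have hlt v : f (R.lo v) < f (R.hi v) := hf (R.lo_mem_coords v) (R.hi_mem_coords v) (R.lo_lt_hi v)
  R.reshape R.horiz (fun v => f (R.c v)) (fun v => f (R.lo v)) (fun v => f (R.hi v)) hlt
    (fun _ _ => id) fun u v _ => by
      rw [seg, seg]
      rcases eq_or_ne (R.horiz u) (R.horiz v) with he | he
      · rw [he, gridSeg_inter_gridSeg_nonempty_iff (hlt u).le (hlt v).le,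
          gridSeg_inter_gridSeg_nonempty_iff (R.lo_lt_hi u).le (R.lo_lt_hi v).le]
        simp only [hf.eq_iff_eq, hf.le_iff_le, c_mem_coords, lo_mem_coords, hi_mem_coords]
      · rw [gridSeg_inter_gridSeg_nonempty_iff_of_ne he,
          gridSeg_inter_gridSeg_nonempty_iff_of_ne he]
        simp only [mem_Icc, hf.le_iff_le, c_mem_coords, lo_mem_coords, hi_mem_coords]

def StabbedByDiagonal (R : GridRep G) : Prop := ∀ v, ∃ x, (x, x) ∈ R.seg v

lemma mk_self_mem_seg_iff (R : GridRep G) {v : V} {x : ℝ} :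
    (x, x) ∈ R.seg v ↔ x = R.c v ∧ x ∈ Icc (R.lo v) (R.hi v) :=
  mk_self_mem_gridSeg_iff

lemma StabbedByDiagonal.c_mem_Icc {R : GridRep G} (hR : R.StabbedByDiagonal) (v : V) :
    R.c v ∈ Icc (R.lo v) (R.hi v) := by
  obtain ⟨x, hx⟩ := hR v
  obtain ⟨rfl, hx⟩ := R.mk_self_mem_seg_iff.1 hx
  exact hx

lemma StabbedByDiagonal.relabel {R : GridRep G} (hR : R.StabbedByDiagonal) {f : ℝ → ℝ}
    (hf : StrictMonoOn f R.coords) : (R.relabel f hf).StabbedByDiagonal := fun v =>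
  ⟨f (R.c v), (R.relabel f hf).mk_self_mem_seg_iff.2 ⟨rfl,
    hf.monotoneOn (R.lo_mem_coords v) (R.c_mem_coords v) (hR.c_mem_Icc v).1,
    hf.monotoneOn (R.c_mem_coords v) (R.hi_mem_coords v) (hR.c_mem_Icc v).2⟩⟩

lemma StabbedByDiagonal.exists_natCast_c [Finite V] {R : GridRep G} (hR : R.StabbedByDiagonal) :
    ∃ R' : GridRep G, R'.StabbedByDiagonal ∧ ∀ v, ∃ n : ℕ, R'.c v = n :=
  have hf := Nat.strictMono_cast.comp_strictMonoOn R.finite_coords.strictMonoOn_ncard_inter_Iio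
  ⟨R.relabel _ hf, hR.relabel hf, fun _ => ⟨_, rfl⟩⟩

lemma stabbedByDiagonal_affineY (R : GridRep G) {γ : ℝ} (hγ : γ ≠ 0) (δ : ℝ)
    (h : ∀ v, ∃ x, (x, γ * x + δ) ∈ R.seg v) : (R.affineY hγ δ).StabbedByDiagonal := fun v =>
  let ⟨x, hx⟩ := h v
  ⟨x, by rw [seg_affineY]; exact hx⟩

lemma exists_stabbedByDiagonal_of_vertical [Finite V] (R : GridRep G) (s : ℝ)
    (hs : ∀ v, ∃ y, (s, y) ∈ R.seg v) : ∃ R' : GridRep G, R'.StabbedByDiagonal := by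
  have hvert : ∀ v, R.horiz v = false → R.c v = s := fun v hv => by
    obtain ⟨y, hy⟩ := hs v
    rw [seg, hv, gridSeg_false, prodMk_mem_set_prod_eq, mem_singleton_iff] at hy
    exact hy.1.symm
  have hhor : ∀ v, R.horiz v = true → s ∈ Icc (R.lo v) (R.hi v) := fun v hv => by
    obtain ⟨y, hy⟩ := hs v
    rw [seg, hv, gridSeg_true, prodMk_mem_set_prod_eq] at hy
    exact hy.1
  obtain ⟨m, hm⟩ := R.finite_coords.bddBelow
  obtain ⟨M, hM1, hM⟩ := R.finite_coords.bddAbove.exists_ge (m + 1)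
  have hmM : m < M := (lt_add_one m).trans_le hM1
  have hc v : R.c v ∈ Icc m M := ⟨hm (R.c_mem_coords v), hM _ (R.c_mem_coords v)⟩
  have hlo v : R.lo v ∈ Icc m M := ⟨hm (R.lo_mem_coords v), hM _ (R.lo_mem_coords v)⟩
  refine ⟨R.reshape R.horiz (fun v => bif R.horiz v then R.c v else R.lo v)
    (fun v => bif R.horiz v then m else R.lo v) (fun v => bif R.horiz v then M else R.hi v)
    (fun v => by cases R.horiz v; exacts [R.lo_lt_hi v, hmM]) (fun _ _ => id)
    (fun u v huv => ?_), fun v => ?_⟩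
  · have hdisj := not_nonempty_iff_eq_empty.2 ∘ R.same_disjoint u v huv
    rw [seg, seg]
    cases hu : R.horiz u <;> cases hv : R.horiz v <;>
      simp only [hu, hv, cond_true, cond_false, gridSeg_inter_gridSeg_nonempty_iff_of_ne,
        gridSeg_inter_gridSeg_nonempty_iff, (R.lo_lt_hi u).le, (R.lo_lt_hi v).le, hmM.le, ne_eq,
        Bool.false_eq_true, Bool.true_eq_false, not_false_eq_true, and_true] at hdisj ⊢
    · exact ⟨fun h => ⟨(hvert u hu).trans (hvert v hv).symm, h.2⟩,
        fun h => absurd h (hdisj trivial)⟩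
    · exact and_congr_right fun _ => iff_of_true (hlo u) (hvert u hu ▸ hhor v hv)
    · exact and_congr_left fun _ => iff_of_true (hlo v) (hvert v hv ▸ hhor u hu)
    · exact iff_self_and.2 fun _ =>
        ⟨(hhor u hu).1.trans (hhor v hv).2, (hhor v hv).1.trans (hhor u hu).2⟩
  · cases hv : R.horiz v
    · exact ⟨R.lo v, by simp [mk_self_mem_seg_iff, hv, (R.lo_lt_hi v).le]⟩
    · exact ⟨R.c v, by simpa [mk_self_mem_seg_iff, hv] using hc v⟩

lemma exists_eq_c_of_mem_seg_inter (R : GridRep G) {u v : V} (huv : u ≠ v) {q : ℝ × ℝ}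
    (hq : q ∈ R.seg u ∩ R.seg v) : ∃ w w', q = (R.c w, R.c w') := by
  have hne : R.horiz u ≠ R.horiz v := fun he => (R.same_disjoint u v huv he).subset hq
  obtain ⟨hqu, hqv⟩ := hq
  rw [seg] at hqu hqv
  cases hu : R.horiz u <;> cases hv : R.horiz v <;>
    simp only [hu, hv, ne_eq, not_true_eq_false] at hne
  all_goals simp only [hu, hv, gridSeg_true, gridSeg_false, mem_prod, mem_singleton_iff] at hqu hqv
  · exact ⟨u, v, Prod.ext hqu.1 hqv.2⟩
  · exact ⟨v, u, Prod.ext hqv.1 hqu.2⟩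

end GridRep

lemma IsStabGIG.exists_stabbedByDiagonal {V : Type*} [Finite V] {G : SimpleGraph V}
    (h : IsStabGIG G) : ∃ R : GridRep G, R.StabbedByDiagonal := by
  obtain ⟨R, a, b, k, hab, hR⟩ := h
  rcases eq_or_ne b 0 with rfl | hb
  · have ha : a ≠ 0 := by simpa using hab
    refine R.exists_stabbedByDiagonal_of_vertical (k / a) fun v => ?_
    obtain ⟨⟨x, y⟩, hq, hqk⟩ := hR v
    refine ⟨y, ?_⟩
    convert hq
    rw [div_eq_iff ha]
    linarith
  rcases eq_or_ne a 0 with rfl | ha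
  · refine R.transpose.exists_stabbedByDiagonal_of_vertical (k / b) fun v => ?_
    obtain ⟨⟨x, y⟩, hq, hqk⟩ := hR v
    refine ⟨x, ?_⟩
    rw [R.seg_transpose, mem_preimage, Prod.swap_prod_mk]
    convert hq
    rw [div_eq_iff hb]
    linarith
  · refine ⟨R.affineY (div_ne_zero (neg_ne_zero.2 ha) hb) (k / b),
      R.stabbedByDiagonal_affineY _ _ fun v => ?_⟩
    obtain ⟨⟨x, y⟩, hq, hqk⟩ := hR v
    refine ⟨x, ?_⟩
    convert hq
    field_simp
    linarith

/-- A simple graph is a StabGIG iff it has a grid intersection representation in which the line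
`y = x` meets every segment in a point `(r, r)` with `r` an integer, and every intersection
point of two distinct segments has integer coordinates. -/
theorem stabGIG_iff_good_rep {V : Type*} [Fintype V] (G : SimpleGraph V) :
    IsStabGIG G ↔
      ∃ R : GridRep G,
        (∀ v : V, ∃ r : ℤ, ((r : ℝ), (r : ℝ)) ∈ R.seg v) ∧
        (∀ u v : V, u ≠ v → ∀ q ∈ R.seg u ∩ R.seg v,
          ∃ m k : ℤ, q = ((m : ℝ), (k : ℝ))) := by
  constructor
  · intro h
    obtain ⟨R₀, hR₀⟩ := h.exists_stabbedByDiagonal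
    obtain ⟨R, hR, hc⟩ := hR₀.exists_natCast_c
    refine ⟨R, fun v => ?_, fun u v huv q hq => ?_⟩
    · obtain ⟨n, hn⟩ := hc v
      refine ⟨n, ?_⟩
      rw [Int.cast_natCast, ← hn, R.mk_self_mem_seg_iff]
      exact ⟨rfl, hR.c_mem_Icc v⟩
    · obtain ⟨w, w', rfl⟩ := R.exists_eq_c_of_mem_seg_inter huv hq
      obtain ⟨m, hm⟩ := hc w
      obtain ⟨n, hn⟩ := hc w'
      exact ⟨m, n, by rw [hm, hn, Int.cast_natCast, Int.cast_natCast]⟩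
  · rintro ⟨R, hdiag, -⟩
    refine ⟨R, 1, -1, 0, Or.inl one_ne_zero, fun v => ?_⟩
    obtain ⟨r, hr⟩ := hdiag v
    exact ⟨_, hr, by ring⟩
end

section
/- Let n ≥ 1 and let H be a simple graph on vertex set {1,…,n} whose edge set is partitioned into two sets E₁ and E₂ such that, for each t ∈ {1,2} and any two edges {i,j}, {i',j'} ∈ E_t with i < j and i' < j', the open real intervals (i,j) and (i',j') are either disjoint or one is contained in the other. Let κ assign to each edge e of H an odd integer κ(e) ≥ 3. Then the graph obtained from H by replacing every edge e = xy by a path x, u_e^1, …, u_e^{κ(e)}, y through κ(e) new internal vertices (the paths for distinct edges being internally disjoint) and then adding one new apex vertex adjacent exactly to all of the original vertices 1,…,n is a stabbable grid intersection graph. -/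
open Set

/-- The smaller endpoint of an unordered pair in `Fin n`. -/
def sym2min {n : ℕ} (e : Sym2 (Fin n)) : Fin n :=
  Sym2.lift ⟨fun a b => min a b, fun a b => min_comm a b⟩ e

/-- The larger endpoint of an unordered pair in `Fin n`. -/
def sym2max {n : ℕ} (e : Sym2 (Fin n)) : Fin n :=
  Sym2.lift ⟨fun a b => max a b, fun a b => max_comm a b⟩ e

/-- A family of edges on `{0,…,n-1}` is *nested* if for any two of its edges `{i,j}`, `{i',j'}`
(with `i < j`, `i' < j'`) the open real intervals `(i,j)` and `(i',j')` are disjoint or one is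
contained in the other. -/
def NestedFamily (n : ℕ) (E : Set (Sym2 (Fin n))) : Prop :=
  ∀ i j i' j' : Fin n, i < j → i' < j' → s(i, j) ∈ E → s(i', j') ∈ E →
    Disjoint (Set.Ioo (i.1 : ℝ) (j.1 : ℝ)) (Set.Ioo (i'.1 : ℝ) (j'.1 : ℝ)) ∨
    Set.Ioo (i.1 : ℝ) (j.1 : ℝ) ⊆ Set.Ioo (i'.1 : ℝ) (j'.1 : ℝ) ∨
    Set.Ioo (i'.1 : ℝ) (j'.1 : ℝ) ⊆ Set.Ioo (i.1 : ℝ) (j.1 : ℝ)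

/-- The graph obtained from `H` by replacing every edge `e` by a path through `κ e` new
internal vertices, and adding one new apex vertex (`none`) adjacent exactly to the original
vertices. The internal vertex `⟨e, t⟩` is the `(t+1)`-st vertex of the path replacing `e`,
going from the smaller to the larger endpoint of `e`. -/
def ApexSubdiv {n : ℕ} (H : SimpleGraph (Fin n)) (κ : Sym2 (Fin n) → ℕ) :
    SimpleGraph (Option (Fin n ⊕ (Σ e : H.edgeSet, Fin (κ e.1)))) :=
  SimpleGraph.fromRel (fun u v =>
    match u, v with
    | none, some (Sum.inl _) => True
    | some (Sum.inl x), some (Sum.inr ⟨e, t⟩) =>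
        (t.1 = 0 ∧ x = sym2min e.1) ∨ (t.1 = κ e.1 - 1 ∧ x = sym2max e.1)
    | some (Sum.inr ⟨e, t⟩), some (Sum.inr ⟨e', t'⟩) => e = e' ∧ t.1 + 1 = t'.1
    | _, _ => False)

lemma mem_gridSeg_true {c lo hi : ℝ} {q : ℝ × ℝ} :
    q ∈ gridSeg true c lo hi ↔ (q.2 = c ∧ lo ≤ q.1 ∧ q.1 ≤ hi) := by
  simp [gridSeg]

lemma mem_gridSeg_false {c lo hi : ℝ} {q : ℝ × ℝ} :
    q ∈ gridSeg false c lo hi ↔ (q.1 = c ∧ lo ≤ q.2 ∧ q.2 ≤ hi) := by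
  simp [gridSeg]

lemma isStabGIG_of_model {V : Type*} (G : SimpleGraph V)
    (hz : V → Bool) (p lo hi : V → ℝ)
    (hlop : ∀ v, lo v ≤ p v) (hphi : ∀ v, p v ≤ hi v)
    (hlh : ∀ v, lo v < hi v)
    (hinj : ∀ u v, u ≠ v → hz u = hz v → p u ≠ p v)
    (hadj : ∀ u v, u ≠ v →
      (G.Adj u v ↔ (hz u ≠ hz v ∧ lo u ≤ p v ∧ p v ≤ hi u ∧ lo v ≤ p u ∧ p u ≤ hi v))) :
    IsStabGIG G := by
  have hdisj : ∀ u v : V, u ≠ v → hz u = hz v →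
      gridSeg (hz u) (p u) (lo u) (hi u) ∩ gridSeg (hz v) (p v) (lo v) (hi v) = ∅ := by
    intro u v huv hsame
    have hpne := hinj u v huv hsame
    ext q
    simp only [Set.mem_inter_iff, Set.mem_empty_iff_false, iff_false]
    rintro ⟨h1, h2⟩
    rcases hb : hz u with _ | _ <;> rw [hb] at h1 <;> rw [← hsame, hb] at h2
    · rw [mem_gridSeg_false] at h1 h2
      exact hpne (h1.1 ▸ h2.1 ▸ rfl)
    · rw [mem_gridSeg_true] at h1 h2
      exact hpne (h1.1 ▸ h2.1 ▸ rfl)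
  refine ⟨⟨hz, p, lo, hi, hlh, hdisj, ?_⟩, 1, -1, 0, Or.inl one_ne_zero, ?_⟩
  · intro u v huv
    rw [hadj u v huv]
    constructor
    · rintro ⟨hne, h1, h2, h3, h4⟩
      rcases hbu : hz u with _ | _
      · have hbv : hz v = true := by
          rcases hbv : hz v with _ | _
          · exact absurd (hbu.trans hbv.symm) hne
          · rfl
        refine ⟨(p u, p v), ?_, ?_⟩
        · rw [mem_gridSeg_false]; exact ⟨rfl, h1, h2⟩
        · rw [hbv, mem_gridSeg_true]; exact ⟨rfl, h3, h4⟩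
      · have hbv : hz v = false := by
          rcases hbv : hz v with _ | _
          · rfl
          · exact absurd (hbu.trans hbv.symm) hne
        refine ⟨(p v, p u), ?_, ?_⟩
        · rw [mem_gridSeg_true]; exact ⟨rfl, h1, h2⟩
        · rw [hbv, mem_gridSeg_false]; exact ⟨rfl, h3, h4⟩
    · rintro ⟨q, hq1, hq2⟩
      have hne : hz u ≠ hz v := by
        intro hsame
        have h0 := hdisj u v huv hsame
        rw [Set.eq_empty_iff_forall_notMem] at h0
        exact h0 q ⟨hq1, hq2⟩
      refine ⟨hne, ?_⟩
      rcases hbu : hz u with _ | _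
      · have hbv : hz v = true := by
          rcases hbv : hz v with _ | _
          · exact absurd (hbu.trans hbv.symm) hne
          · rfl
        rw [hbu, mem_gridSeg_false] at hq1
        rw [hbv, mem_gridSeg_true] at hq2
        exact ⟨hq2.1 ▸ hq1.2.1, hq2.1 ▸ hq1.2.2, hq1.1 ▸ hq2.2.1, hq1.1 ▸ hq2.2.2⟩
      · have hbv : hz v = false := by
          rcases hbv : hz v with _ | _
          · rfl
          · exact absurd (hbu.trans hbv.symm) hne
        rw [hbu, mem_gridSeg_true] at hq1
        rw [hbv, mem_gridSeg_false] at hq2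
        exact ⟨hq2.1 ▸ hq1.2.1, hq2.1 ▸ hq1.2.2, hq1.1 ▸ hq2.2.1, hq1.1 ▸ hq2.2.2⟩
  · intro v
    refine ⟨(p v, p v), ?_, by ring⟩
    show (p v, p v) ∈ gridSeg (hz v) (p v) (lo v) (hi v)
    rcases hb : hz v with _ | _
    · rw [mem_gridSeg_false]; exact ⟨rfl, hlop v, hphi v⟩
    · rw [mem_gridSeg_true]; exact ⟨rfl, hlop v, hphi v⟩

section S2
variable {n : ℕ} {H : SimpleGraph (Fin n)}

lemma sym2_eq_mk (e : Sym2 (Fin n)) : e = s(sym2min e, sym2max e) := by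
  induction e using Sym2.ind with
  | _ a b =>
    simp only [sym2min, sym2max, Sym2.lift_mk]
    rcases le_total a b with h | h
    · rw [min_eq_left h, max_eq_right h]
    · rw [min_eq_right h, max_eq_left h, Sym2.eq_swap]

def eMin (e : H.edgeSet) : Fin n := sym2min e.1
def eMax (e : H.edgeSet) : Fin n := sym2max e.1

lemma eMin_lt_eMax (e : H.edgeSet) : eMin e < eMax e := by
  obtain ⟨e, he⟩ := e
  induction e using Sym2.ind with
  | _ a b =>
    rw [SimpleGraph.mem_edgeSet] at he
    have hne : a ≠ b := he.ne
    simp only [eMin, eMax, sym2min, sym2max, Sym2.lift_mk]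
    exact min_lt_max.mpr hne

lemma edge_ext (e f : H.edgeSet) (h1 : eMin e = eMin f) (h2 : eMax e = eMax f) : e = f := by
  apply Subtype.ext
  have h1' : sym2min e.1 = sym2min f.1 := h1
  have h2' : sym2max e.1 = sym2max f.1 := h2
  rw [sym2_eq_mk e.1, sym2_eq_mk f.1, h1', h2']

end S2

section S3
variable {n : ℕ} {H : SimpleGraph (Fin n)}

noncomputable def xr {n : ℕ} (m : Fin n) : ℝ := (m.1 : ℝ) + 1
noncomputable def gm (n : ℕ) : ℝ := 1 / (16 * ((n : ℝ) + 2))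

lemma gm_pos : 0 < gm n := by
  have : (0:ℝ) < 16 * ((n:ℝ) + 2) := by positivity
  exact div_pos one_pos this

lemma mul_gm_le {m : ℕ} (h : m ≤ n + 2) : (m : ℝ) * gm n ≤ 1/16 := by
  have h2 : (0:ℝ) < (n:ℝ) + 2 := by positivity
  rw [gm, div_eq_mul_inv, one_mul]
  rw [mul_inv_le_iff₀ (by positivity)]
  have : (m:ℝ) ≤ (n:ℝ) + 2 := by exact_mod_cast h
  nlinarith

lemma xr_bounds (m : Fin n) : 1 ≤ xr m ∧ xr m ≤ n := by
  have h1 : (m.1 : ℝ) + 1 ≤ (n : ℝ) := by exact_mod_cast m.2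
  constructor
  · simp only [xr]; have : (0:ℝ) ≤ (m.1:ℝ) := by positivity
    linarith
  · simp only [xr]; linarith

lemma xr_lt_xr {i j : Fin n} (h : i < j) : xr i + 1 ≤ xr j := by
  have : (i.1 : ℝ) + 1 ≤ (j.1 : ℝ) := by exact_mod_cast h
  simp [xr]; linarith

variable (κ : Sym2 (Fin n) → ℕ)

noncomputable def bE (e : H.edgeSet) : ℝ := xr (eMin e) + 1/8 + (((eMax e).1 + 1 : ℕ) : ℝ) * gm n
noncomputable def QE (e : H.edgeSet) : ℝ := xr (eMin e) + 1/2 - (((eMax e).1 + 1 : ℕ) : ℝ) * gm n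
noncomputable def TE (e : H.edgeSet) : ℝ := xr (eMax e) + ((n + 1 - (eMin e).1 : ℕ) : ℝ) * gm n
noncomputable def DE (e : H.edgeSet) : ℝ := TE e - gm n / 2
noncomputable def b2E (e : H.edgeSet) : ℝ := xr (eMin e) + 1/8 + ((n + 1 - (eMax e).1 : ℕ) : ℝ) * gm n

noncomputable def yE (e : H.edgeSet) (s : ℕ) : ℝ :=
  if s + 3 ≤ κ e.1 then bE e + ((s + 1 : ℕ) : ℝ) * (gm n / (2 * κ e.1))
  else if s + 2 = κ e.1 then QE e else TE e

noncomputable def wE (e : H.edgeSet) (s : ℕ) : ℝ :=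
  if s + 3 ≤ κ e.1 then b2E e + ((s + 1 : ℕ) : ℝ) * (gm n / (2 * κ e.1))
  else if s + 2 = κ e.1 then DE e else TE e

variable {κ}

lemma bE_bounds (e : H.edgeSet) : xr (eMin e) + 1/8 < bE e ∧ bE e ≤ xr (eMin e) + 1/8 + 1/16 := by
  have h1 : (0:ℝ) < (((eMax e).1 + 1 : ℕ) : ℝ) * gm n := by
    have := gm_pos (n := n); positivity
  have h2 : (((eMax e).1 + 1 : ℕ) : ℝ) * gm n ≤ 1/16 :=
    mul_gm_le (by have := (eMax e).2; omega)
  constructor <;> [skip; skip] <;> simp only [bE] <;> linarith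

lemma QE_bounds (e : H.edgeSet) : xr (eMin e) + 1/4 < QE e ∧ QE e < xr (eMin e) + 1/2 := by
  have h1 : (0:ℝ) < (((eMax e).1 + 1 : ℕ) : ℝ) * gm n := by
    have := gm_pos (n := n); positivity
  have h2 : (((eMax e).1 + 1 : ℕ) : ℝ) * gm n ≤ 1/16 :=
    mul_gm_le (by have := (eMax e).2; omega)
  constructor <;> simp only [QE] <;> linarith

lemma TE_bounds (e : H.edgeSet) : xr (eMax e) + gm n ≤ TE e ∧ TE e ≤ xr (eMax e) + 1/16 := by
  have hge : 1 ≤ n + 1 - (eMin e).1 := by have := (eMin e).2; omega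
  have h1 : gm n ≤ ((n + 1 - (eMin e).1 : ℕ) : ℝ) * gm n := by
    have := gm_pos (n := n)
    have : (1:ℝ) ≤ ((n + 1 - (eMin e).1 : ℕ) : ℝ) := by exact_mod_cast hge
    nlinarith [gm_pos (n := n)]
  have h2 : ((n + 1 - (eMin e).1 : ℕ) : ℝ) * gm n ≤ 1/16 := mul_gm_le (by omega)
  constructor <;> simp only [TE] <;> linarith

lemma DE_bounds (e : H.edgeSet) : xr (eMax e) + gm n / 2 ≤ DE e ∧ DE e = TE e - gm n / 2 := by
  have := TE_bounds e
  exact ⟨by simp only [DE]; linarith [this.1], rfl⟩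

lemma b2E_bounds (e : H.edgeSet) :
    xr (eMin e) + 1/8 < b2E e ∧ b2E e ≤ xr (eMin e) + 1/8 + 1/16 := by
  have hge : 1 ≤ n + 1 - (eMax e).1 := by have := (eMax e).2; omega
  have h1 : (0:ℝ) < ((n + 1 - (eMax e).1 : ℕ) : ℝ) * gm n := by
    have h := gm_pos (n := n)
    have : (1:ℝ) ≤ ((n + 1 - (eMax e).1 : ℕ) : ℝ) := by exact_mod_cast hge
    nlinarith
  have h2 : ((n + 1 - (eMax e).1 : ℕ) : ℝ) * gm n ≤ 1/16 := mul_gm_le (by omega)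
  constructor <;> simp only [b2E] <;> linarith

end S3

section S4
variable {n : ℕ} {H : SimpleGraph (Fin n)} {κ : Sym2 (Fin n) → ℕ}

lemma yE_box {e : H.edgeSet} {s : ℕ} (h : s + 3 ≤ κ e.1) :
    bE e < yE κ e s ∧ yE κ e s < bE e + gm n / 2 := by
  have hk0 : (0:ℝ) < (κ e.1 : ℝ) := by
    have : 0 < κ e.1 := by omega
    exact_mod_cast this
  have hq0 : (0:ℝ) < gm n / (2 * κ e.1) := by
    have := gm_pos (n := n); positivity
  have hkq : (κ e.1 : ℝ) * (gm n / (2 * κ e.1)) = gm n / 2 := by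
    field_simp
  have hcast : ((s + 1 : ℕ) : ℝ) ≤ (κ e.1 : ℝ) - 2 := by
    have : (s + 1) + 2 ≤ κ e.1 := by omega
    have := (Nat.cast_le (α := ℝ)).mpr this
    push_cast at this ⊢; linarith
  have hpos : (0:ℝ) < ((s + 1 : ℕ) : ℝ) := by positivity
  rw [yE, if_pos h]
  constructor
  · nlinarith
  · nlinarith

lemma yE_Q {e : H.edgeSet} {s : ℕ} (h : s + 2 = κ e.1) : yE κ e s = QE e := by
  rw [yE, if_neg (by omega), if_pos h]

lemma yE_T {e : H.edgeSet} {s : ℕ} (h : κ e.1 ≤ s + 1) : yE κ e s = TE e := by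
  rw [yE, if_neg (by omega), if_neg (by omega)]

lemma wE_box {e : H.edgeSet} {s : ℕ} (h : s + 3 ≤ κ e.1) :
    b2E e < wE κ e s ∧ wE κ e s < b2E e + gm n / 2 := by
  have hk0 : (0:ℝ) < (κ e.1 : ℝ) := by
    have : 0 < κ e.1 := by omega
    exact_mod_cast this
  have hq0 : (0:ℝ) < gm n / (2 * κ e.1) := by
    have := gm_pos (n := n); positivity
  have hkq : (κ e.1 : ℝ) * (gm n / (2 * κ e.1)) = gm n / 2 := by
    field_simp
  have hcast : ((s + 1 : ℕ) : ℝ) ≤ (κ e.1 : ℝ) - 2 := by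
    have : (s + 1) + 2 ≤ κ e.1 := by omega
    have := (Nat.cast_le (α := ℝ)).mpr this
    push_cast at this ⊢; linarith
  have hpos : (0:ℝ) < ((s + 1 : ℕ) : ℝ) := by positivity
  rw [wE, if_pos h]
  constructor
  · nlinarith
  · nlinarith

lemma wE_D {e : H.edgeSet} {s : ℕ} (h : s + 2 = κ e.1) : wE κ e s = DE e := by
  rw [wE, if_neg (by omega), if_pos h]

lemma wE_T {e : H.edgeSet} {s : ℕ} (h : κ e.1 ≤ s + 1) : wE κ e s = TE e := by
  rw [wE, if_neg (by omega), if_neg (by omega)]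

/-- gap between cells -/
lemma cell_gap (e : H.edgeSet) : xr (eMin e) + 1 ≤ xr (eMax e) :=
  xr_lt_xr (eMin_lt_eMax e)

lemma gm_le_small : gm n ≤ 1/32 := by
  rw [gm]
  rw [div_le_div_iff₀ (by positivity) (by norm_num)]
  have : (0:ℝ) ≤ (n:ℝ) := by positivity
  nlinarith

lemma yE_le {e : H.edgeSet} (hk3 : 3 ≤ κ e.1) {s s' : ℕ} (h : s ≤ s') :
    yE κ e s ≤ yE κ e s' := by
  have hbb := bE_bounds (H := H) e
  have hqq := QE_bounds (H := H) e
  have htt := TE_bounds (H := H) e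
  have hgap := cell_gap (H := H) e
  have hgm := gm_le_small (n := n)
  have hgmp := gm_pos (n := n)
  rcases le_or_gt (s' + 3) (κ e.1) with h1 | h1
  · rw [yE, if_pos (by omega), yE, if_pos h1]
    have hk0 : (0:ℝ) < (κ e.1 : ℝ) := by
      have : 0 < κ e.1 := by omega
      exact_mod_cast this
    have hq0 : (0:ℝ) ≤ gm n / (2 * κ e.1) := by positivity
    have : ((s + 1 : ℕ) : ℝ) ≤ ((s' + 1 : ℕ) : ℝ) := by exact_mod_cast (by omega : s + 1 ≤ s' + 1)
    nlinarith
  · rcases le_or_gt (κ e.1) (s' + 1) with h2 | h2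
    · rw [yE_T h2]
      rcases le_or_gt (s + 3) (κ e.1) with h3 | h3
      · have hb := yE_box (κ := κ) (e := e) (s := s) h3
        linarith
      · rcases le_or_gt (κ e.1) (s + 1) with h4 | h4
        · rw [yE_T h4]
        · rw [yE_Q (by omega)]
          linarith
    · -- s' + 2 = κ
      have h2' : s' + 2 = κ e.1 := by omega
      rw [yE_Q h2']
      rcases le_or_gt (s + 3) (κ e.1) with h3 | h3
      · have hb := yE_box (κ := κ) (e := e) (s := s) h3
        linarith
      · have : s = s' := by omega
        rw [this, yE_Q h2']

lemma yE_lt {e : H.edgeSet} (hk3 : 3 ≤ κ e.1) {s s' : ℕ} (h : s < s') (h2 : s + 2 ≤ κ e.1) :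
    yE κ e s < yE κ e s' := by
  have hbb := bE_bounds (H := H) e
  have hqq := QE_bounds (H := H) e
  have htt := TE_bounds (H := H) e
  have hgap := cell_gap (H := H) e
  have hgm := gm_le_small (n := n)
  have hgmp := gm_pos (n := n)
  rcases le_or_gt (s' + 3) (κ e.1) with h1 | h1
  · rw [yE, if_pos (by omega), yE, if_pos h1]
    have hk0 : (0:ℝ) < (κ e.1 : ℝ) := by
      have : 0 < κ e.1 := by omega
      exact_mod_cast this
    have hq0 : (0:ℝ) < gm n / (2 * κ e.1) := by positivity
    have : ((s + 1 : ℕ) : ℝ) < ((s' + 1 : ℕ) : ℝ) := by exact_mod_cast (by omega : s + 1 < s' + 1)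
    nlinarith
  · rcases le_or_gt (κ e.1) (s' + 1) with hs' | hs'
    · rw [yE_T hs']
      rcases le_or_gt (s + 3) (κ e.1) with h3 | h3
      · have hb := yE_box (κ := κ) (e := e) (s := s) h3
        linarith
      · rw [yE_Q (by omega)]
        linarith
    · have h2' : s' + 2 = κ e.1 := by omega
      rw [yE_Q h2']
      have h3 : s + 3 ≤ κ e.1 := by omega
      have hb := yE_box (κ := κ) (e := e) (s := s) h3
      linarith

lemma wE_le {e : H.edgeSet} (hk3 : 3 ≤ κ e.1) {s s' : ℕ} (h : s ≤ s') :
    wE κ e s ≤ wE κ e s' := by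
  have hbb := b2E_bounds (H := H) e
  have htt := TE_bounds (H := H) e
  have hdd := DE_bounds (H := H) e
  have hgap := cell_gap (H := H) e
  have hgm := gm_le_small (n := n)
  have hgmp := gm_pos (n := n)
  rcases le_or_gt (s' + 3) (κ e.1) with h1 | h1
  · rw [wE, if_pos (by omega), wE, if_pos h1]
    have hk0 : (0:ℝ) < (κ e.1 : ℝ) := by
      have : 0 < κ e.1 := by omega
      exact_mod_cast this
    have hq0 : (0:ℝ) ≤ gm n / (2 * κ e.1) := by positivity
    have : ((s + 1 : ℕ) : ℝ) ≤ ((s' + 1 : ℕ) : ℝ) := by exact_mod_cast (by omega : s + 1 ≤ s' + 1)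
    nlinarith
  · rcases le_or_gt (κ e.1) (s' + 1) with h2 | h2
    · rw [wE_T h2]
      rcases le_or_gt (s + 3) (κ e.1) with h3 | h3
      · have hb := wE_box (κ := κ) (e := e) (s := s) h3
        linarith
      · rcases le_or_gt (κ e.1) (s + 1) with h4 | h4
        · rw [wE_T h4]
        · rw [wE_D (by omega)]
          linarith
    · have h2' : s' + 2 = κ e.1 := by omega
      rw [wE_D h2']
      rcases le_or_gt (s + 3) (κ e.1) with h3 | h3
      · have hb := wE_box (κ := κ) (e := e) (s := s) h3
        linarith
      · have : s = s' := by omega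
        rw [this, wE_D h2']

lemma wE_lt {e : H.edgeSet} (hk3 : 3 ≤ κ e.1) {s s' : ℕ} (h : s < s') (h2 : s + 2 ≤ κ e.1) :
    wE κ e s < wE κ e s' := by
  have hbb := b2E_bounds (H := H) e
  have htt := TE_bounds (H := H) e
  have hdd := DE_bounds (H := H) e
  have hgap := cell_gap (H := H) e
  have hgm := gm_le_small (n := n)
  have hgmp := gm_pos (n := n)
  rcases le_or_gt (s' + 3) (κ e.1) with h1 | h1
  · rw [wE, if_pos (by omega), wE, if_pos h1]
    have hk0 : (0:ℝ) < (κ e.1 : ℝ) := by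
      have : 0 < κ e.1 := by omega
      exact_mod_cast this
    have hq0 : (0:ℝ) < gm n / (2 * κ e.1) := by positivity
    have : ((s + 1 : ℕ) : ℝ) < ((s' + 1 : ℕ) : ℝ) := by exact_mod_cast (by omega : s + 1 < s' + 1)
    nlinarith
  · rcases le_or_gt (κ e.1) (s' + 1) with hs' | hs'
    · rw [wE_T hs']
      rcases le_or_gt (s + 3) (κ e.1) with h3 | h3
      · have hb := wE_box (κ := κ) (e := e) (s := s) h3
        linarith
      · rw [wE_D (by omega)]
        linarith
    · have h2' : s' + 2 = κ e.1 := by omega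
      rw [wE_D h2']
      have h3 : s + 3 ≤ κ e.1 := by omega
      have hb := wE_box (κ := κ) (e := e) (s := s) h3
      linarith

end S4

section S5
variable {n : ℕ} {H : SimpleGraph (Fin n)} {κ : Sym2 (Fin n) → ℕ}

lemma adj_none_inl (m : Fin n) : (ApexSubdiv H κ).Adj none (some (Sum.inl m)) := by
  rw [ApexSubdiv, SimpleGraph.fromRel_adj]
  exact ⟨by simp, Or.inl trivial⟩

lemma adj_none_inr (e : H.edgeSet) (t : Fin (κ e.1)) :
    ¬ (ApexSubdiv H κ).Adj none (some (Sum.inr ⟨e, t⟩)) := by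
  rw [ApexSubdiv, SimpleGraph.fromRel_adj]
  rintro ⟨-, h | h⟩ <;> exact h

lemma adj_inl_inl (m m' : Fin n) :
    ¬ (ApexSubdiv H κ).Adj (some (Sum.inl m)) (some (Sum.inl m')) := by
  rw [ApexSubdiv, SimpleGraph.fromRel_adj]
  rintro ⟨-, h | h⟩ <;> exact h

lemma adj_inl_inr (m : Fin n) (e : H.edgeSet) (t : Fin (κ e.1)) :
    (ApexSubdiv H κ).Adj (some (Sum.inl m)) (some (Sum.inr ⟨e, t⟩)) ↔
      ((t.1 = 0 ∧ m = sym2min e.1) ∨ (t.1 = κ e.1 - 1 ∧ m = sym2max e.1)) := by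
  rw [ApexSubdiv, SimpleGraph.fromRel_adj]
  constructor
  · rintro ⟨-, h | h⟩
    · exact h
    · exact h.elim
  · intro h
    exact ⟨by simp, Or.inl h⟩

lemma adj_inr_inr (e : H.edgeSet) (t : Fin (κ e.1)) (f : H.edgeSet) (s : Fin (κ f.1)) :
    (ApexSubdiv H κ).Adj (some (Sum.inr ⟨e, t⟩)) (some (Sum.inr ⟨f, s⟩)) ↔
      ((Sigma.mk e t : Σ e : H.edgeSet, Fin (κ e.1)) ≠ ⟨f, s⟩ ∧
        ((e = f ∧ t.1 + 1 = s.1) ∨ (f = e ∧ s.1 + 1 = t.1))) := by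
  rw [ApexSubdiv, SimpleGraph.fromRel_adj]
  simp only [ne_eq, Option.some.injEq, Sum.inr.injEq]

end S5

section S6
variable {n : ℕ} {H : SimpleGraph (Fin n)} {κ : Sym2 (Fin n) → ℕ}

variable (κ) in
noncomputable def posV (pg : H.edgeSet → Bool) :
    Option (Fin n ⊕ (Σ e : H.edgeSet, Fin (κ e.1))) → ℝ
  | none => 0
  | some (Sum.inl m) => xr m
  | some (Sum.inr ⟨e, t⟩) => if pg e then yE κ e t.1 else -(wE κ e t.1)

variable (κ) in
def hzV : Option (Fin n ⊕ (Σ e : H.edgeSet, Fin (κ e.1))) → Bool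
  | none => true
  | some (Sum.inl _) => false
  | some (Sum.inr ⟨_, t⟩) => decide (t.1 % 2 = 0)

variable (κ) in
noncomputable def loV (pg : H.edgeSet → Bool) :
    Option (Fin n ⊕ (Σ e : H.edgeSet, Fin (κ e.1))) → ℝ
  | none => -((n : ℝ) + 2)
  | some (Sum.inl m) => -(xr m + 1/2)
  | some (Sum.inr ⟨e, t⟩) =>
      if pg e then (if t.1 = 0 then xr (eMin e) else yE κ e (t.1 - 1))
      else -(wE κ e (t.1 + 1))

variable (κ) in
noncomputable def hiV (pg : H.edgeSet → Bool) :
    Option (Fin n ⊕ (Σ e : H.edgeSet, Fin (κ e.1))) → ℝ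
  | none => (n : ℝ) + 2
  | some (Sum.inl m) => xr m + 1/2
  | some (Sum.inr ⟨e, t⟩) =>
      if pg e then yE κ e (t.1 + 1)
      else (if t.1 = 0 then xr (eMin e)
            else if t.1 = κ e.1 - 1 then xr (eMax e) else -(wE κ e (t.1 - 1)))

-- global zone bounds
lemma yE_gt (e : H.edgeSet) (s : ℕ) : xr (eMin e) + 1/8 < yE κ e s := by
  have hbb := bE_bounds (H := H) e
  have hqq := QE_bounds (H := H) e
  have htt := TE_bounds (H := H) e
  have hgap := cell_gap (H := H) e
  have hgmp := gm_pos (n := n)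
  rcases le_or_gt (s + 3) (κ e.1) with h | h
  · have := yE_box (κ := κ) (e := e) (s := s) h; linarith
  · rcases le_or_gt (κ e.1) (s + 1) with h2 | h2
    · rw [yE_T h2]; linarith
    · rw [yE_Q (by omega)]; linarith

lemma yE_le_T (e : H.edgeSet) (s : ℕ) : yE κ e s ≤ TE e := by
  have hbb := bE_bounds (H := H) e
  have hqq := QE_bounds (H := H) e
  have htt := TE_bounds (H := H) e
  have hgap := cell_gap (H := H) e
  have hgmp := gm_pos (n := n)
  have hgm := gm_le_small (n := n)
  rcases le_or_gt (s + 3) (κ e.1) with h | h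
  · have := yE_box (κ := κ) (e := e) (s := s) h; linarith
  · rcases le_or_gt (κ e.1) (s + 1) with h2 | h2
    · rw [yE_T h2]
    · rw [yE_Q (by omega)]; linarith

lemma wE_gt (e : H.edgeSet) (s : ℕ) : xr (eMin e) + 1/8 < wE κ e s := by
  have hbb := b2E_bounds (H := H) e
  have hdd := DE_bounds (H := H) e
  have htt := TE_bounds (H := H) e
  have hgap := cell_gap (H := H) e
  have hgmp := gm_pos (n := n)
  rcases le_or_gt (s + 3) (κ e.1) with h | h
  · have := wE_box (κ := κ) (e := e) (s := s) h; linarith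
  · rcases le_or_gt (κ e.1) (s + 1) with h2 | h2
    · rw [wE_T h2]; linarith
    · rw [wE_D (by omega)]; linarith

lemma wE_le_T (e : H.edgeSet) (s : ℕ) : wE κ e s ≤ TE e := by
  have hbb := b2E_bounds (H := H) e
  have hdd := DE_bounds (H := H) e
  have htt := TE_bounds (H := H) e
  have hgap := cell_gap (H := H) e
  have hgmp := gm_pos (n := n)
  have hgm := gm_le_small (n := n)
  rcases le_or_gt (s + 3) (κ e.1) with h | h
  · have := wE_box (κ := κ) (e := e) (s := s) h; linarith
  · rcases le_or_gt (κ e.1) (s + 1) with h2 | h2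
    · rw [wE_T h2]
    · rw [wE_D (by omega)]; linarith

lemma wE_pos (e : H.edgeSet) (s : ℕ) : 0 < wE κ e s := by
  have := wE_gt (κ := κ) (H := H) e s
  have := (xr_bounds (eMin e)).1
  linarith

lemma yE_pos (e : H.edgeSet) (s : ℕ) : 0 < yE κ e s := by
  have := yE_gt (κ := κ) (H := H) e s
  have := (xr_bounds (eMin e)).1
  linarith

end S6

section S7
variable {n : ℕ} {H : SimpleGraph (Fin n)} {κ : Sym2 (Fin n) → ℕ}

lemma rank_lt {α β : ℕ} (h : α < β) : (α : ℝ) * gm n + gm n ≤ (β : ℝ) * gm n := by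
  have h1 : (α : ℝ) + 1 ≤ (β : ℝ) := by exact_mod_cast h
  nlinarith [gm_pos (n := n)]

lemma yE_cases (e : H.edgeSet) (a : ℕ) :
    (a + 3 ≤ κ e.1 ∧ bE e < yE κ e a ∧ yE κ e a < bE e + gm n / 2) ∨
    (a + 2 = κ e.1 ∧ yE κ e a = QE e) ∨ (κ e.1 ≤ a + 1 ∧ yE κ e a = TE e) := by
  rcases le_or_gt (a + 3) (κ e.1) with h | h
  · exact Or.inl ⟨h, yE_box h⟩
  · rcases le_or_gt (κ e.1) (a + 1) with h2 | h2
    · exact Or.inr (Or.inr ⟨h2, yE_T h2⟩)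
    · exact Or.inr (Or.inl ⟨by omega, yE_Q (by omega)⟩)

lemma wE_cases (e : H.edgeSet) (a : ℕ) :
    (a + 3 ≤ κ e.1 ∧ b2E e < wE κ e a ∧ wE κ e a < b2E e + gm n / 2) ∨
    (a + 2 = κ e.1 ∧ wE κ e a = DE e) ∨ (κ e.1 ≤ a + 1 ∧ wE κ e a = TE e) := by
  rcases le_or_gt (a + 3) (κ e.1) with h | h
  · exact Or.inl ⟨h, wE_box h⟩
  · rcases le_or_gt (κ e.1) (a + 1) with h2 | h2
    · exact Or.inr (Or.inr ⟨h2, wE_T h2⟩)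
    · exact Or.inr (Or.inl ⟨by omega, wE_D (by omega)⟩)

lemma bE_rank {e f : H.edgeSet} (h : eMin e = eMin f) (h2 : (eMax e).1 < (eMax f).1) :
    bE e + gm n ≤ bE f := by
  have := rank_lt (n := n) (α := (eMax e).1 + 1) (β := (eMax f).1 + 1) (by omega)
  simp only [bE, h]
  push_cast at this ⊢
  linarith

lemma QE_rank {e f : H.edgeSet} (h : eMin e = eMin f) (h2 : (eMax e).1 < (eMax f).1) :
    QE f + gm n ≤ QE e := by
  have := rank_lt (n := n) (α := (eMax e).1 + 1) (β := (eMax f).1 + 1) (by omega)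
  simp only [QE, h]
  push_cast at this ⊢
  linarith

lemma TE_rank {e f : H.edgeSet} (h : eMax e = eMax f) (h2 : (eMin e).1 < (eMin f).1) :
    TE f + gm n ≤ TE e := by
  have := rank_lt (n := n) (α := n + 1 - (eMin f).1) (β := n + 1 - (eMin e).1)
    (by have := (eMin f).2; omega)
  simp only [TE, h]
  push_cast at this ⊢
  linarith

lemma b2E_rank {e f : H.edgeSet} (h : eMin e = eMin f) (h2 : (eMax e).1 < (eMax f).1) :
    b2E f + gm n ≤ b2E e := by
  have := rank_lt (n := n) (α := n + 1 - (eMax f).1) (β := n + 1 - (eMax e).1)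
    (by have := (eMax f).2; omega)
  simp only [b2E, h]
  push_cast at this ⊢
  linarith

lemma eMax_ne {e f : H.edgeSet} (h : eMin e = eMin f) (hef : e ≠ f) : eMax e ≠ eMax f :=
  fun h2 => hef (edge_ext e f h h2)

lemma eMin_ne {e f : H.edgeSet} (h : eMax e = eMax f) (hef : e ≠ f) : eMin e ≠ eMin f :=
  fun h2 => hef (edge_ext e f h2 h)

lemma xr_sep {m m' : Fin n} (h : m ≠ m') : xr m + 1 ≤ xr m' ∨ xr m' + 1 ≤ xr m := by
  rcases lt_or_gt_of_ne h with h2 | h2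
  · exact Or.inl (xr_lt_xr h2)
  · exact Or.inr (xr_lt_xr h2)

lemma no_crossing {E : Set (Sym2 (Fin n))} (hnest : NestedFamily n E)
    {e f : H.edgeSet} (he : e.1 ∈ E) (hf : f.1 ∈ E)
    (h1 : eMin e < eMin f) (h2 : eMin f < eMax e) (h3 : eMax e < eMax f) : False := by
  have he' : s(eMin e, eMax e) ∈ E := by rw [eMin, eMax, ← sym2_eq_mk]; exact he
  have hf' : s(eMin f, eMax f) ∈ E := by rw [eMin, eMax, ← sym2_eq_mk]; exact hf
  have key := hnest (eMin e) (eMax e) (eMin f) (eMax f) (eMin_lt_eMax e) (eMin_lt_eMax f) he' hf'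
  have r1 : ((eMin e).1 : ℝ) < ((eMin f).1 : ℝ) := by exact_mod_cast h1
  have r2 : ((eMin f).1 : ℝ) < ((eMax e).1 : ℝ) := by exact_mod_cast h2
  have r3 : ((eMax e).1 : ℝ) < ((eMax f).1 : ℝ) := by exact_mod_cast h3
  rcases key with hD | hS | hS
  · have hx1 : (((eMin f).1 : ℝ) + ((eMax e).1 : ℝ)) / 2 ∈
        Set.Ioo ((eMin e).1 : ℝ) ((eMax e).1 : ℝ) := ⟨by linarith, by linarith⟩
    have hx2 : (((eMin f).1 : ℝ) + ((eMax e).1 : ℝ)) / 2 ∈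
        Set.Ioo ((eMin f).1 : ℝ) ((eMax f).1 : ℝ) := ⟨by linarith, by linarith⟩
    exact Set.disjoint_left.mp hD hx1 hx2
  · have hx1 : (((eMin e).1 : ℝ) + ((eMin f).1 : ℝ)) / 2 ∈
        Set.Ioo ((eMin e).1 : ℝ) ((eMax e).1 : ℝ) := ⟨by linarith, by linarith⟩
    have := hS hx1
    rw [Set.mem_Ioo] at this
    linarith [this.1]
  · have hx2 : (((eMax e).1 : ℝ) + ((eMax f).1 : ℝ)) / 2 ∈
        Set.Ioo ((eMin f).1 : ℝ) ((eMax f).1 : ℝ) := ⟨by linarith, by linarith⟩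
    have := hS hx2
    rw [Set.mem_Ioo] at this
    linarith [this.2]

end S7

section S8
variable {n : ℕ} {H : SimpleGraph (Fin n)} {κ : Sym2 (Fin n) → ℕ}

lemma nocross_p1p1 {E : Set (Sym2 (Fin n))} (hnest : NestedFamily n E)
    {e f : H.edgeSet} (he : e.1 ∈ E) (hf : f.1 ∈ E) (hef : e ≠ f)
    (hke : 3 ≤ κ e.1) (hkf : 3 ≤ κ f.1)
    (hkoe : κ e.1 % 2 = 1) (hkof : κ f.1 % 2 = 1)
    {a b : ℕ} (ha : a < κ e.1) (hae : a % 2 = 0) (hb : b < κ f.1) (hbo : b % 2 = 1)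
    (m1 : (if a = 0 then xr (eMin e) else yE κ e (a-1)) ≤ yE κ f b)
    (m2 : yE κ f b ≤ yE κ e (a+1))
    (m3 : yE κ f (b-1) ≤ yE κ e a)
    (m4 : yE κ e a ≤ yE κ f (b+1)) : False := by
  have hbbE := bE_bounds (H := H) e
  have hbbF := bE_bounds (H := H) f
  have hqqE := QE_bounds (H := H) e
  have hqqF := QE_bounds (H := H) f
  have httE := TE_bounds (H := H) e
  have httF := TE_bounds (H := H) f
  have hgapE := cell_gap (H := H) e
  have hgapF := cell_gap (H := H) f
  have hgm := gm_le_small (n := n)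
  have hgmp := gm_pos (n := n)
  -- lower bound for lo_e a
  have hm1' : xr (eMin e) ≤ yE κ f b := by
    rcases Nat.eq_zero_or_pos a with h0 | h0
    · rwa [if_pos h0] at m1
    · rw [if_neg (by omega)] at m1
      have := yE_gt (κ := κ) (H := H) e (a - 1)
      linarith
  have hazone : a + 3 ≤ κ e.1 ∨ κ e.1 ≤ a + 1 := by omega
  have hbzone : b + 4 ≤ κ f.1 ∨ b + 2 = κ f.1 := by omega
  rcases hbzone with hbz | hbz
  · -- b in box of f
    have hfb1 := yE_box (κ := κ) (e := f) (s := b - 1) (by omega)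
    have hfb2 := yE_box (κ := κ) (e := f) (s := b + 1) (by omega)
    rcases hazone with haz | haz
    · -- a in box of e
      have heb := yE_box (κ := κ) (e := e) (s := a) haz
      rcases lt_trichotomy (eMin e) (eMin f) with hmm | hmm | hmm
      · have := xr_lt_xr hmm; linarith
      · rcases lt_trichotomy ((eMax e).1) ((eMax f).1) with hxx | hxx | hxx
        · have := bE_rank hmm hxx; linarith
        · exact hef (edge_ext e f hmm (Fin.ext hxx))
        · have := bE_rank hmm.symm hxx; linarith
      · have := xr_lt_xr hmm; linarith
    · -- a at T of e
      have hT : yE κ e a = TE e := yE_T haz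
      rw [hT] at m3 m4
      rcases lt_trichotomy (eMax e) (eMin f) with hmm | hmm | hmm
      · have := xr_lt_xr hmm; linarith
      · rw [hmm] at httE; linarith
      · have := xr_lt_xr hmm; linarith
  · -- b at Q of f
    have hQ : yE κ f b = QE f := yE_Q hbz
    have hTf : yE κ f (b+1) = TE f := yE_T (by omega)
    have hfb1 := yE_box (κ := κ) (e := f) (s := b - 1) (by omega)
    rw [hQ] at m1 m2
    rw [hTf] at m4
    rcases hazone with haz | haz
    · -- a in box of e
      have heb := yE_box (κ := κ) (e := e) (s := a) haz
      have hhi : yE κ e (a+1) ≤ QE e := by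
        rw [← yE_Q (show (κ e.1 - 2) + 2 = κ e.1 by omega)]
        exact yE_le hke (by omega)
      rcases lt_trichotomy (eMin e) (eMin f) with hmm | hmm | hmm
      · have := xr_lt_xr hmm; linarith
      · rcases lt_trichotomy ((eMax e).1) ((eMax f).1) with hxx | hxx | hxx
        · have := bE_rank hmm hxx; linarith
        · exact hef (edge_ext e f hmm (Fin.ext hxx))
        · have := QE_rank hmm.symm hxx; linarith
      · have := xr_lt_xr hmm; linarith
    · -- a at T of e
      have hT : yE κ e a = TE e := yE_T haz
      have hT2 : yE κ e (a+1) = TE e := yE_T (by omega)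
      rw [hT2] at m2
      have hloQ : yE κ e (a - 1) = QE e := yE_Q (by omega)
      have ha0 : ¬ (a = 0) := by omega
      rw [if_neg ha0, hloQ] at m1
      rw [hT] at m3 m4
      -- derive i_e < i_f
      rcases lt_trichotomy (eMin e) (eMin f) with hmm | hmm | hmm
      · -- crossing candidate
        have h2 : eMin f < eMax e := by
          rcases lt_trichotomy (eMin f) (eMax e) with h | h | h
          · exact h
          · rw [h] at hqqF; linarith
          · have := xr_lt_xr h; linarith
        have h3 : eMax e < eMax f := by
          rcases lt_trichotomy (eMax e) (eMax f) with h | h | h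
          · exact h
          · have := TE_rank h (Fin.lt_def.mp hmm)
            linarith
          · have := xr_lt_xr h; linarith
        exact no_crossing hnest he hf hmm h2 h3
      · rcases lt_trichotomy ((eMax e).1) ((eMax f).1) with hxx | hxx | hxx
        · have := QE_rank hmm hxx; linarith
        · exact hef (edge_ext e f hmm (Fin.ext hxx))
        · have h : eMax f < eMax e := by exact Fin.lt_def.mpr hxx
          have := xr_lt_xr h; linarith
      · have := xr_lt_xr hmm; linarith

end S8

section S9
variable {n : ℕ} {H : SimpleGraph (Fin n)} {κ : Sym2 (Fin n) → ℕ}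

lemma nocross_p2p2 {E : Set (Sym2 (Fin n))} (hnest : NestedFamily n E)
    {e f : H.edgeSet} (he : e.1 ∈ E) (hf : f.1 ∈ E) (hef : e ≠ f)
    (hke : 3 ≤ κ e.1) (hkf : 3 ≤ κ f.1)
    (hkoe : κ e.1 % 2 = 1) (hkof : κ f.1 % 2 = 1)
    {a b : ℕ} (ha : a < κ e.1) (hae : a % 2 = 0) (hb : b < κ f.1) (hbo : b % 2 = 1)
    (M1 : wE κ f b ≤ wE κ e (a+1))
    (M3 : wE κ e a ≤ wE κ f (b+1))
    (M4 : wE κ f (b-1) ≤ wE κ e a) : False := by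
  have hbbE := b2E_bounds (H := H) e
  have hbbF := b2E_bounds (H := H) f
  have httE := TE_bounds (H := H) e
  have httF := TE_bounds (H := H) f
  have hddE := DE_bounds (H := H) e
  have hddF := DE_bounds (H := H) f
  have hgapE := cell_gap (H := H) e
  have hgapF := cell_gap (H := H) f
  have hgm := gm_le_small (n := n)
  have hgmp := gm_pos (n := n)
  have hbzone : b + 4 ≤ κ f.1 ∨ b + 2 = κ f.1 := by omega
  have hazone : a + 3 ≤ κ e.1 ∨ κ e.1 ≤ a + 1 := by omega
  rcases hbzone with hbz | hbz
  · -- b in box of f : wE e a ∈ [wE f (b-1), wE f (b+1)] ⊆ box₂ f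
    have hfb1 := wE_box (κ := κ) (e := f) (s := b - 1) (by omega)
    have hfb2 := wE_box (κ := κ) (e := f) (s := b + 1) (by omega)
    rcases hazone with haz | haz
    · have heb := wE_box (κ := κ) (e := e) (s := a) haz
      rcases lt_trichotomy (eMin e) (eMin f) with hmm | hmm | hmm
      · have := xr_lt_xr hmm; linarith
      · rcases lt_trichotomy ((eMax e).1) ((eMax f).1) with hxx | hxx | hxx
        · have := b2E_rank hmm hxx; linarith
        · exact hef (edge_ext e f hmm (Fin.ext hxx))
        · have := b2E_rank hmm.symm hxx; linarith
      · have := xr_lt_xr hmm; linarith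
    · have hT : wE κ e a = TE e := wE_T haz
      rw [hT] at M3 M4
      rcases lt_trichotomy (eMax e) (eMin f) with hmm | hmm | hmm
      · have := xr_lt_xr hmm; linarith
      · rw [hmm] at httE; linarith
      · have := xr_lt_xr hmm; linarith
  · -- b at D of f
    have hD : wE κ f b = DE f := wE_D hbz
    have hTf : wE κ f (b+1) = TE f := wE_T (by omega)
    have hfb1 := wE_box (κ := κ) (e := f) (s := b - 1) (by omega)
    rw [hD] at M1
    rw [hTf] at M3
    rcases hazone with haz | haz
    · -- a in box₂ of e
      have heb := wE_box (κ := κ) (e := e) (s := a) haz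
      -- kill eMin e < eMin f
      rcases lt_trichotomy (eMin e) (eMin f) with hmm | hmm | hmm
      · have := xr_lt_xr hmm; linarith
      · -- same left endpoint
        rcases lt_trichotomy ((eMax e).1) ((eMax f).1) with hxx | hxx | hxx
        · -- TE f > TE e impossible with M1 via zone of wE e (a+1)
          have hxr := xr_lt_xr (Fin.lt_def.mpr hxx)
          rcases (by omega : a + 4 ≤ κ e.1 ∨ a + 3 = κ e.1) with haz2 | haz2
          · have heb2 := wE_box (κ := κ) (e := e) (s := a + 1) (by omega)
            rw [hmm] at hbbE
            linarith
          · have hDe : wE κ e (a+1) = DE e := wE_D (by omega)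
            rw [hDe] at M1
            linarith
        · exact hef (edge_ext e f hmm (Fin.ext hxx))
        · have := b2E_rank hmm.symm hxx
          linarith
      · -- eMin f < eMin e : potential crossing f ⊂-crossing e
        -- first: eMin e < eMax f
        have h2 : eMin e < eMax f := by
          rcases lt_trichotomy (eMin e) (eMax f) with h | h | h
          · exact h
          · rw [← h] at httF; linarith
          · have := xr_lt_xr h; linarith
        -- M1 forces wE e (a+1) ≥ DE f, which forces zone D and TE f ≤ TE e
        have hTfe : TE f ≤ TE e := by
          rcases (by omega : a + 4 ≤ κ e.1 ∨ a + 3 = κ e.1) with haz2 | haz2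
          · have heb2 := wE_box (κ := κ) (e := e) (s := a + 1) (by omega)
            have hxr := xr_lt_xr h2
            linarith
          · have hDe : wE κ e (a+1) = DE e := wE_D (by omega)
            rw [hDe] at M1
            rw [hddE.2, hddF.2] at M1
            linarith
        have h3 : eMax f < eMax e := by
          rcases lt_trichotomy (eMax f) (eMax e) with h | h | h
          · exact h
          · have := TE_rank (e := f) (f := e) h (Fin.lt_def.mp hmm)
            linarith
          · have := xr_lt_xr h; linarith
        exact no_crossing hnest hf he hmm h2 h3
    · -- a at T of e
      have hT : wE κ e a = TE e := wE_T haz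
      have hT2 : wE κ e (a+1) = TE e := wE_T (by omega)
      rw [hT] at M3 M4
      rw [hT2] at M1
      rw [hddF.2] at M1
      rcases lt_trichotomy (eMax e) (eMax f) with hmm | hmm | hmm
      · have := xr_lt_xr hmm; linarith
      · rcases lt_trichotomy ((eMin e).1) ((eMin f).1) with hxx | hxx | hxx
        · have := TE_rank hmm hxx; linarith
        · exact hef (edge_ext e f (Fin.ext hxx) hmm)
        · have := TE_rank hmm.symm hxx; linarith
      · have := xr_lt_xr hmm; linarith

end S9

section S10
variable {n : ℕ} {H : SimpleGraph (Fin n)} {κ : Sym2 (Fin n) → ℕ}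

lemma sameedge_p1 {e : H.edgeSet} (hke : 3 ≤ κ e.1) {a b : ℕ}
    (ha : a < κ e.1) (hb : b < κ e.1) (hab : a ≠ b) :
    ((if a = 0 then xr (eMin e) else yE κ e (a-1)) ≤ yE κ e b ∧
     yE κ e b ≤ yE κ e (a+1) ∧
     (if b = 0 then xr (eMin e) else yE κ e (b-1)) ≤ yE κ e a ∧
     yE κ e a ≤ yE κ e (b+1)) ↔ (a + 1 = b ∨ b + 1 = a) := by
  constructor
  · rintro ⟨m1, m2, m3, m4⟩
    by_contra hcon
    push_neg at hcon
    rcases (by omega : a + 2 ≤ b ∨ b + 2 ≤ a) with h | h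
    · have h1 : yE κ e (a+1) < yE κ e (a+2) := yE_lt hke (by omega) (by omega)
      have h2 : yE κ e (a+2) ≤ yE κ e b := yE_le hke (by omega)
      linarith
    · have h1 : yE κ e (b+1) < yE κ e (b+2) := yE_lt hke (by omega) (by omega)
      have h2 : yE κ e (b+2) ≤ yE κ e a := yE_le hke (by omega)
      linarith
  · intro h
    rcases h with h | h
    · refine ⟨?_, ?_, ?_, ?_⟩
      · rcases Nat.eq_zero_or_pos a with h0 | h0
        · rw [if_pos h0]
          have := yE_gt (κ := κ) (H := H) e b
          linarith
        · rw [if_neg (by omega)]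
          exact yE_le hke (by omega)
      · exact yE_le hke (by omega)
      · rw [if_neg (by omega), show b - 1 = a by omega]
      · exact yE_le hke (by omega)
    · refine ⟨?_, ?_, ?_, ?_⟩
      · rw [if_neg (by omega), show a - 1 = b by omega]
      · exact yE_le hke (by omega)
      · rcases Nat.eq_zero_or_pos b with h0 | h0
        · rw [if_pos h0]
          have := yE_gt (κ := κ) (H := H) e a
          linarith
        · rw [if_neg (by omega)]
          exact yE_le hke (by omega)
      · exact yE_le hke (by omega)

lemma sameedge_p2 {e : H.edgeSet} (hke : 3 ≤ κ e.1) {a b : ℕ}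
    (ha : a < κ e.1) (hb : b < κ e.1) (hab : a ≠ b) :
    (-(wE κ e (a+1)) ≤ -(wE κ e b) ∧
     -(wE κ e b) ≤ (if a = 0 then xr (eMin e) else if a = κ e.1 - 1 then xr (eMax e) else -(wE κ e (a-1))) ∧
     -(wE κ e (b+1)) ≤ -(wE κ e a) ∧
     -(wE κ e a) ≤ (if b = 0 then xr (eMin e) else if b = κ e.1 - 1 then xr (eMax e) else -(wE κ e (b-1)))) ↔
    (a + 1 = b ∨ b + 1 = a) := by
  have hxi := (xr_bounds (eMin e)).1
  have hxj := (xr_bounds (eMax e)).1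
  constructor
  · rintro ⟨m1, m2, m3, m4⟩
    by_contra hcon
    push_neg at hcon
    rcases (by omega : a + 2 ≤ b ∨ b + 2 ≤ a) with h | h
    · have h1 : wE κ e (a+1) < wE κ e (a+2) := wE_lt hke (by omega) (by omega)
      have h2 : wE κ e (a+2) ≤ wE κ e b := wE_le hke (by omega)
      linarith
    · have h1 : wE κ e (b+1) < wE κ e (b+2) := wE_lt hke (by omega) (by omega)
      have h2 : wE κ e (b+2) ≤ wE κ e a := wE_le hke (by omega)
      linarith
  · intro h
    rcases h with h | h
    · refine ⟨?_, ?_, ?_, ?_⟩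
      · rw [show b = a + 1 by omega]
      · rcases Nat.eq_zero_or_pos a with h0 | h0
        · rw [if_pos h0]
          have := wE_pos (κ := κ) (H := H) e b
          linarith
        · have ha' : a ≠ κ e.1 - 1 := by omega
          rw [if_neg (by omega), if_neg ha']
          have := wE_le (κ := κ) hke (show a - 1 ≤ b by omega)
          linarith
      · have := wE_le (κ := κ) hke (show a ≤ b + 1 by omega)
        linarith
      · rcases (by omega : b = κ e.1 - 1 ∨ b < κ e.1 - 1) with h0 | h0
        · rw [if_neg (by omega), if_pos h0]
          have := wE_pos (κ := κ) (H := H) e a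
          linarith
        · rw [if_neg (by omega), if_neg (by omega), show b - 1 = a by omega]
    · refine ⟨?_, ?_, ?_, ?_⟩
      · have := wE_le (κ := κ) hke (show b ≤ a + 1 by omega)
        linarith
      · rcases (by omega : a = κ e.1 - 1 ∨ a < κ e.1 - 1) with h0 | h0
        · rcases Nat.eq_zero_or_pos a with h1 | h1
          · rw [if_pos h1]
            have := wE_pos (κ := κ) (H := H) e b
            linarith
          · rw [if_neg (by omega), if_pos h0]
            have := wE_pos (κ := κ) (H := H) e b
            linarith
        · rw [if_neg (by omega), if_neg (by omega), show a - 1 = b by omega]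
      · rw [show a = b + 1 by omega]
      · rcases Nat.eq_zero_or_pos b with h0 | h0
        · rw [if_pos h0]
          have := wE_pos (κ := κ) (H := H) e a
          linarith
        · have hb' : b ≠ κ e.1 - 1 := by omega
          rw [if_neg (by omega), if_neg hb']
          have := wE_le (κ := κ) hke (show b - 1 ≤ a by omega)
          linarith

end S10

section S11
variable {n : ℕ} {H : SimpleGraph (Fin n)} {κ : Sym2 (Fin n) → ℕ}

lemma orig_p1 {e : H.edgeSet} (hke : 3 ≤ κ e.1) (hkoe : κ e.1 % 2 = 1) {a : ℕ}
    (ha : a < κ e.1) (hae : a % 2 = 0) (m : Fin n) :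
    ((if a = 0 then xr (eMin e) else yE κ e (a-1)) ≤ xr m ∧
     xr m ≤ yE κ e (a+1) ∧
     -(xr m + 1/2) ≤ yE κ e a ∧ yE κ e a ≤ xr m + 1/2) ↔
    ((a = 0 ∧ m = eMin e) ∨ (a = κ e.1 - 1 ∧ m = eMax e)) := by
  have hbbE := bE_bounds (H := H) e
  have hqqE := QE_bounds (H := H) e
  have httE := TE_bounds (H := H) e
  have hgapE := cell_gap (H := H) e
  have hgm := gm_le_small (n := n)
  have hgmp := gm_pos (n := n)
  have hQbd : yE κ e (a+1) ≤ QE e ∨ a = κ e.1 - 1 := by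
    rcases (by omega : a + 1 ≤ κ e.1 - 2 ∨ a = κ e.1 - 1) with h | h
    · left
      rw [← yE_Q (show (κ e.1 - 2) + 2 = κ e.1 by omega)]
      exact yE_le hke (by omega)
    · exact Or.inr h
  constructor
  · rintro ⟨m1, m2, m3, m4⟩
    rcases hQbd with hQ | hQ
    · -- then a is not the last index: show a = 0 ∧ m = eMin e
      left
      rcases Nat.eq_zero_or_pos a with h0 | h0
      · rw [if_pos h0] at m1
        refine ⟨h0, ?_⟩
        rcases lt_trichotomy m (eMin e) with h | h | h
        · have := xr_lt_xr h; linarith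
        · exact h
        · have := xr_lt_xr h; linarith
      · exfalso
        rw [if_neg (by omega)] at m1
        have hy := yE_gt (κ := κ) (H := H) e (a-1)
        rcases lt_trichotomy m (eMin e) with h | h | h
        · have := xr_lt_xr h; linarith
        · rw [h] at m1; linarith
        · have := xr_lt_xr h; linarith
    · -- a = κ - 1
      right
      refine ⟨hQ, ?_⟩
      have hT : yE κ e a = TE e := yE_T (by omega)
      rw [hT] at m4
      have hT2 : yE κ e (a+1) = TE e := yE_T (by omega)
      rw [hT2] at m2
      rcases lt_trichotomy m (eMax e) with h | h | h
      · have := xr_lt_xr h; linarith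
      · exact h
      · have := xr_lt_xr h; linarith
  · rintro (⟨h0, hm⟩ | ⟨h0, hm⟩)
    · subst hm
      rw [if_pos h0, h0]
      have hy1 := yE_gt (κ := κ) (H := H) e 1
      have hy0 := yE_box (κ := κ) (e := e) (s := 0) (by omega)
      have hx := (xr_bounds (eMin e)).1
      refine ⟨le_refl _, by linarith, by linarith, by linarith⟩
    · subst hm
      have hT : yE κ e a = TE e := yE_T (by omega)
      have hT2 : yE κ e (a+1) = TE e := yE_T (by omega)
      have hQ : yE κ e (a-1) = QE e := yE_Q (by omega)
      rw [hT, hT2, if_neg (by omega), hQ]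
      have hx := (xr_bounds (eMax e)).1
      refine ⟨by linarith, by linarith, by linarith, by linarith⟩

lemma orig_p2 {e : H.edgeSet} (hke : 3 ≤ κ e.1) (hkoe : κ e.1 % 2 = 1) {a : ℕ}
    (ha : a < κ e.1) (hae : a % 2 = 0) (m : Fin n) :
    (-(wE κ e (a+1)) ≤ xr m ∧
     xr m ≤ (if a = 0 then xr (eMin e) else if a = κ e.1 - 1 then xr (eMax e) else -(wE κ e (a-1))) ∧
     -(xr m + 1/2) ≤ -(wE κ e a) ∧ -(wE κ e a) ≤ xr m + 1/2) ↔
    ((a = 0 ∧ m = eMin e) ∨ (a = κ e.1 - 1 ∧ m = eMax e)) := by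
  have hbbE := b2E_bounds (H := H) e
  have httE := TE_bounds (H := H) e
  have hgapE := cell_gap (H := H) e
  have hgm := gm_le_small (n := n)
  have hgmp := gm_pos (n := n)
  have hxm := (xr_bounds m).1
  constructor
  · rintro ⟨m1, m2, m3, m4⟩
    rcases Nat.eq_zero_or_pos a with h0 | h0
    · left
      rw [if_pos h0] at m2
      rw [h0] at m3
      have hw0 := wE_box (κ := κ) (e := e) (s := 0) (by omega)
      refine ⟨h0, ?_⟩
      rcases lt_trichotomy m (eMin e) with h | h | h
      · have := xr_lt_xr h; linarith
      · exact h
      · have := xr_lt_xr h; linarith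
    · rcases (by omega : a = κ e.1 - 1 ∨ (a ≠ 0 ∧ a ≠ κ e.1 - 1)) with h1 | h1
      · right
        rw [if_neg (by omega), if_pos h1] at m2
        have hT : wE κ e a = TE e := wE_T (by omega)
        rw [hT] at m3
        refine ⟨h1, ?_⟩
        rcases lt_trichotomy m (eMax e) with h | h | h
        · have := xr_lt_xr h; linarith
        · exact h
        · have := xr_lt_xr h; linarith
      · exfalso
        rw [if_neg h1.1, if_neg h1.2] at m2
        have := wE_pos (κ := κ) (H := H) e (a-1)
        linarith
  · rintro (⟨h0, hm⟩ | ⟨h0, hm⟩)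
    · subst hm
      rw [if_pos h0, h0]
      have hw0 := wE_box (κ := κ) (e := e) (s := 0) (by omega)
      have hw1 := wE_pos (κ := κ) (H := H) e 1
      have hx := (xr_bounds (eMin e)).1
      refine ⟨by linarith, le_refl _, by linarith, by linarith⟩
    · subst hm
      have hT : wE κ e a = TE e := wE_T (by omega)
      have hT2 : wE κ e (a+1) = TE e := wE_T (by omega)
      rw [hT, hT2, if_neg (by omega), if_pos h0]
      have hx := (xr_bounds (eMax e)).1
      refine ⟨by linarith, le_refl _, by linarith, by linarith⟩

end S11

section S12
variable {n : ℕ} {H : SimpleGraph (Fin n)} {κ : Sym2 (Fin n) → ℕ}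

lemma inj_p1_diff {e f : H.edgeSet} (hef : e ≠ f) (hke : 3 ≤ κ e.1) (hkf : 3 ≤ κ f.1)
    (a b : ℕ) : yE κ e a ≠ yE κ f b := by
  intro heq
  have hbbE := bE_bounds (H := H) e
  have hbbF := bE_bounds (H := H) f
  have hqqE := QE_bounds (H := H) e
  have hqqF := QE_bounds (H := H) f
  have httE := TE_bounds (H := H) e
  have httF := TE_bounds (H := H) f
  have hgapE := cell_gap (H := H) e
  have hgapF := cell_gap (H := H) f
  have hgm := gm_le_small (n := n)
  have hgmp := gm_pos (n := n)
  rcases yE_cases (κ := κ) e a with ⟨_, e1, e2⟩ | ⟨_, eQ⟩ | ⟨_, eT⟩ <;>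
    rcases yE_cases (κ := κ) f b with ⟨_, f1, f2⟩ | ⟨_, fQ⟩ | ⟨_, fT⟩
  · rcases lt_trichotomy (eMin e) (eMin f) with h | h | h
    · have := xr_lt_xr h; linarith
    · rcases lt_trichotomy ((eMax e).1) ((eMax f).1) with h2 | h2 | h2
      · have := bE_rank h h2; linarith
      · exact hef (edge_ext e f h (Fin.ext h2))
      · have := bE_rank h.symm h2; linarith
    · have := xr_lt_xr h; linarith
  · rw [fQ] at heq
    rcases lt_trichotomy (eMin e) (eMin f) with h | h | h
    · have := xr_lt_xr h; linarith
    · rw [h] at hbbE; linarith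
    · have := xr_lt_xr h; linarith
  · rw [fT] at heq
    rcases lt_trichotomy (eMin e) (eMax f) with h | h | h
    · have := xr_lt_xr h; linarith
    · rw [h] at hbbE; linarith
    · have := xr_lt_xr h; linarith
  · rw [eQ] at heq
    rcases lt_trichotomy (eMin e) (eMin f) with h | h | h
    · have := xr_lt_xr h; linarith
    · rw [← h] at hbbF; linarith
    · have := xr_lt_xr h; linarith
  · rw [eQ, fQ] at heq
    rcases lt_trichotomy (eMin e) (eMin f) with h | h | h
    · have := xr_lt_xr h; linarith
    · rcases lt_trichotomy ((eMax e).1) ((eMax f).1) with h2 | h2 | h2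
      · have := QE_rank h h2; linarith
      · exact hef (edge_ext e f h (Fin.ext h2))
      · have := QE_rank h.symm h2; linarith
    · have := xr_lt_xr h; linarith
  · rw [eQ, fT] at heq
    rcases lt_trichotomy (eMin e) (eMax f) with h | h | h
    · have := xr_lt_xr h; linarith
    · rw [h] at hqqE; linarith
    · have := xr_lt_xr h; linarith
  · rw [eT] at heq
    rcases lt_trichotomy (eMax e) (eMin f) with h | h | h
    · have := xr_lt_xr h; linarith
    · rw [← h] at hbbF; linarith
    · have := xr_lt_xr h; linarith
  · rw [eT, fQ] at heq
    rcases lt_trichotomy (eMax e) (eMin f) with h | h | h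
    · have := xr_lt_xr h; linarith
    · rw [← h] at hqqF; linarith
    · have := xr_lt_xr h; linarith
  · rw [eT, fT] at heq
    rcases lt_trichotomy (eMax e) (eMax f) with h | h | h
    · have := xr_lt_xr h; linarith
    · rcases lt_trichotomy ((eMin e).1) ((eMin f).1) with h2 | h2 | h2
      · have := TE_rank h h2; linarith
      · exact hef (edge_ext e f (Fin.ext h2) h)
      · have := TE_rank h.symm h2; linarith
    · have := xr_lt_xr h; linarith

lemma inj_p2_diff {e f : H.edgeSet} (hef : e ≠ f) (hke : 3 ≤ κ e.1) (hkf : 3 ≤ κ f.1)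
    (a b : ℕ) : wE κ e a ≠ wE κ f b := by
  intro heq
  have hbbE := b2E_bounds (H := H) e
  have hbbF := b2E_bounds (H := H) f
  have httE := TE_bounds (H := H) e
  have httF := TE_bounds (H := H) f
  have hddE := DE_bounds (H := H) e
  have hddF := DE_bounds (H := H) f
  have hgapE := cell_gap (H := H) e
  have hgapF := cell_gap (H := H) f
  have hgm := gm_le_small (n := n)
  have hgmp := gm_pos (n := n)
  rcases wE_cases (κ := κ) e a with ⟨_, e1, e2⟩ | ⟨_, eD⟩ | ⟨_, eT⟩ <;>
    rcases wE_cases (κ := κ) f b with ⟨_, f1, f2⟩ | ⟨_, fD⟩ | ⟨_, fT⟩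
  · rcases lt_trichotomy (eMin e) (eMin f) with h | h | h
    · have := xr_lt_xr h; linarith
    · rcases lt_trichotomy ((eMax e).1) ((eMax f).1) with h2 | h2 | h2
      · have := b2E_rank h h2; linarith
      · exact hef (edge_ext e f h (Fin.ext h2))
      · have := b2E_rank h.symm h2; linarith
    · have := xr_lt_xr h; linarith
  · rw [fD, hddF.2] at heq
    rcases lt_trichotomy (eMin e) (eMax f) with h | h | h
    · have := xr_lt_xr h; linarith
    · rw [h] at hbbE; linarith
    · have := xr_lt_xr h; linarith
  · rw [fT] at heq
    rcases lt_trichotomy (eMin e) (eMax f) with h | h | h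
    · have := xr_lt_xr h; linarith
    · rw [h] at hbbE; linarith
    · have := xr_lt_xr h; linarith
  · rw [eD, hddE.2] at heq
    rcases lt_trichotomy (eMax e) (eMin f) with h | h | h
    · have := xr_lt_xr h; linarith
    · rw [← h] at hbbF; linarith
    · have := xr_lt_xr h; linarith
  · rw [eD, hddE.2, fD, hddF.2] at heq
    rcases lt_trichotomy (eMax e) (eMax f) with h | h | h
    · have := xr_lt_xr h; linarith
    · rcases lt_trichotomy ((eMin e).1) ((eMin f).1) with h2 | h2 | h2
      · have := TE_rank h h2; linarith
      · exact hef (edge_ext e f (Fin.ext h2) h)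
      · have := TE_rank h.symm h2; linarith
    · have := xr_lt_xr h; linarith
  · rw [eD, hddE.2, fT] at heq
    rcases lt_trichotomy (eMax e) (eMax f) with h | h | h
    · have := xr_lt_xr h; linarith
    · rcases lt_trichotomy ((eMin e).1) ((eMin f).1) with h2 | h2 | h2
      · have := TE_rank h h2; linarith
      · exact hef (edge_ext e f (Fin.ext h2) h)
      · have := TE_rank h.symm h2; linarith
    · have := xr_lt_xr h; linarith
  · rw [eT] at heq
    rcases lt_trichotomy (eMax e) (eMin f) with h | h | h
    · have := xr_lt_xr h; linarith
    · rw [← h] at hbbF; linarith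
    · have := xr_lt_xr h; linarith
  · rw [eT, fD, hddF.2] at heq
    rcases lt_trichotomy (eMax e) (eMax f) with h | h | h
    · have := xr_lt_xr h; linarith
    · rcases lt_trichotomy ((eMin e).1) ((eMin f).1) with h2 | h2 | h2
      · have := TE_rank h h2; linarith
      · exact hef (edge_ext e f (Fin.ext h2) h)
      · have := TE_rank h.symm h2; linarith
    · have := xr_lt_xr h; linarith
  · rw [eT, fT] at heq
    rcases lt_trichotomy (eMax e) (eMax f) with h | h | h
    · have := xr_lt_xr h; linarith
    · rcases lt_trichotomy ((eMin e).1) ((eMin f).1) with h2 | h2 | h2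
      · have := TE_rank h h2; linarith
      · exact hef (edge_ext e f (Fin.ext h2) h)
      · have := TE_rank h.symm h2; linarith
    · have := xr_lt_xr h; linarith

lemma xr_ne_yE (m : Fin n) (e : H.edgeSet) (hke : 3 ≤ κ e.1) (a : ℕ) :
    xr m ≠ yE κ e a := by
  intro heq
  have hbbE := bE_bounds (H := H) e
  have hqqE := QE_bounds (H := H) e
  have httE := TE_bounds (H := H) e
  have hgm := gm_le_small (n := n)
  have hgmp := gm_pos (n := n)
  rcases yE_cases (κ := κ) e a with ⟨_, e1, e2⟩ | ⟨_, eQ⟩ | ⟨_, eT⟩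
  · rcases lt_trichotomy m (eMin e) with h | h | h
    · have := xr_lt_xr h; linarith
    · rw [h] at heq; linarith
    · have := xr_lt_xr h; linarith
  · rw [eQ] at heq
    rcases lt_trichotomy m (eMin e) with h | h | h
    · have := xr_lt_xr h; linarith
    · rw [h] at heq; linarith
    · have := xr_lt_xr h; linarith
  · rw [eT] at heq
    rcases lt_trichotomy m (eMax e) with h | h | h
    · have := xr_lt_xr h; linarith
    · rw [h] at heq; linarith
    · have := xr_lt_xr h; linarith

end S12

section S13
variable {n : ℕ} {H : SimpleGraph (Fin n)} {κ : Sym2 (Fin n) → ℕ}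

lemma main_construction (hn : 1 ≤ n)
    (E₁ E₂ : Set (Sym2 (Fin n))) (hunion : E₁ ∪ E₂ = H.edgeSet)
    (hnest₁ : NestedFamily n E₁) (hnest₂ : NestedFamily n E₂)
    (hκ : ∀ e ∈ H.edgeSet, Odd (κ e) ∧ 3 ≤ κ e)
    (pg : H.edgeSet → Bool)
    (hpg1 : ∀ e : H.edgeSet, pg e = true → e.1 ∈ E₁)
    (hpg2 : ∀ e : H.edgeSet, pg e = false → e.1 ∈ E₂) :
    IsStabGIG (ApexSubdiv H κ) := by
  have hk3 : ∀ e : H.edgeSet, 3 ≤ κ e.1 := fun e => (hκ e.1 e.2).2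
  have hko : ∀ e : H.edgeSet, κ e.1 % 2 = 1 := fun e => Nat.odd_iff.mp (hκ e.1 e.2).1
  apply isStabGIG_of_model _ (hzV κ) (posV κ pg) (loV κ pg) (hiV κ pg)
  · -- lo ≤ pos
    rintro (_ | m | ⟨e, t⟩)
    · simp only [loV, posV]
      have : (0:ℝ) ≤ (n:ℝ) := by positivity
      linarith
    · simp only [loV, posV]
      have := (xr_bounds m).1
      linarith
    · simp only [loV, posV]
      rcases hpg : pg e with _ | _
      · simp only [if_neg (Bool.not_eq_true _ ▸ hpg), Bool.false_eq_true, if_false]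
        have := wE_le (κ := κ) (hk3 e) (show t.1 ≤ t.1 + 1 by omega)
        linarith
      · rw [if_pos rfl, if_pos rfl]
        rcases Nat.eq_zero_or_pos t.1 with h0 | h0
        · rw [if_pos h0, h0]
          have := yE_gt (κ := κ) (H := H) e 0
          linarith
        · rw [if_neg (by omega)]
          exact yE_le (hk3 e) (by omega)
  · -- pos ≤ hi
    rintro (_ | m | ⟨e, t⟩)
    · simp only [hiV, posV]; positivity
    · simp only [hiV, posV]; linarith
    · simp only [hiV, posV]
      rcases hpg : pg e with _ | _
      · simp only [Bool.false_eq_true, if_false]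
        have ht := t.2
        rcases Nat.eq_zero_or_pos t.1 with h0 | h0
        · rw [if_pos h0]
          have := wE_pos (κ := κ) (H := H) e t.1
          have := (xr_bounds (eMin e)).1
          linarith
        · rw [if_neg (by omega)]
          by_cases h1 : t.1 = κ e.1 - 1
          · rw [if_pos h1]
            have := wE_pos (κ := κ) (H := H) e t.1
            have := (xr_bounds (eMax e)).1
            linarith
          · rw [if_neg h1]
            have := wE_le (κ := κ) (hk3 e) (show t.1 - 1 ≤ t.1 by omega)
            linarith
      · rw [if_pos rfl, if_pos rfl]
        exact yE_le (hk3 e) (by omega)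
  · -- lo < hi
    rintro (_ | m | ⟨e, t⟩)
    · simp only [loV, hiV]
      have : (0:ℝ) ≤ (n:ℝ) := by positivity
      linarith
    · simp only [loV, hiV]
      have := (xr_bounds m).1
      linarith
    · simp only [loV, hiV]
      rcases hpg : pg e with _ | _
      · simp only [Bool.false_eq_true, if_false]
        have ht := t.2
        rcases Nat.eq_zero_or_pos t.1 with h0 | h0
        · rw [if_pos h0]
          have := wE_pos (κ := κ) (H := H) e (t.1 + 1)
          have := (xr_bounds (eMin e)).1
          linarith
        · rw [if_neg (by omega)]
          by_cases h1 : t.1 = κ e.1 - 1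
          · rw [if_pos h1]
            have := wE_pos (κ := κ) (H := H) e (t.1 + 1)
            have := (xr_bounds (eMax e)).1
            linarith
          · rw [if_neg h1]
            have := wE_lt (κ := κ) (hk3 e) (show t.1 - 1 < t.1 + 1 by omega)
              (show (t.1 - 1) + 2 ≤ κ e.1 by have := t.2; omega)
            linarith
      · rw [if_pos rfl, if_pos rfl]
        rcases Nat.eq_zero_or_pos t.1 with h0 | h0
        · rw [if_pos h0]
          have := yE_gt (κ := κ) (H := H) e (t.1 + 1)
          linarith
        · rw [if_neg (by omega)]
          exact yE_lt (hk3 e) (by omega) (by have := t.2; omega)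
  · -- injectivity of positions within a class
    rintro (_ | m | ⟨e, t⟩) (_ | m' | ⟨f, s⟩) huv hsame
    · exact absurd rfl huv
    · simp [hzV] at hsame
    · simp only [posV]
      rcases hpg : pg f with _ | _
      · simp only [Bool.false_eq_true, if_false]
        have := wE_pos (κ := κ) (H := H) f s.1
        intro h; linarith
      · rw [if_pos rfl]
        have := yE_pos (κ := κ) (H := H) f s.1
        intro h; linarith
    · simp [hzV] at hsame
    · have hne : m ≠ m' := fun hh => huv (by rw [hh])
      simp only [posV]
      intro h
      apply hne
      have hval : (m.1 : ℝ) = (m'.1 : ℝ) := by simp only [xr] at h; linarith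
      exact Fin.ext (by exact_mod_cast hval)
    · simp only [posV]
      rcases hpg : pg f with _ | _
      · simp only [Bool.false_eq_true, if_false]
        have := wE_pos (κ := κ) (H := H) f s.1
        have := (xr_bounds m).1
        intro h; linarith
      · rw [if_pos rfl]
        exact xr_ne_yE m f (hk3 f) s.1
    · simp only [posV]
      rcases hpg : pg e with _ | _
      · simp only [Bool.false_eq_true, if_false]
        have := wE_pos (κ := κ) (H := H) e t.1
        intro h; linarith
      · rw [if_pos rfl]
        have := yE_pos (κ := κ) (H := H) e t.1
        intro h; linarith
    · simp only [posV]
      rcases hpg : pg e with _ | _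
      · simp only [Bool.false_eq_true, if_false]
        have := wE_pos (κ := κ) (H := H) e t.1
        have := (xr_bounds m').1
        intro h; linarith
      · rw [if_pos rfl]
        exact (xr_ne_yE m' e (hk3 e) t.1).symm
    · -- piece vs piece
      simp only [posV]
      by_cases hef : e = f
      · subst hef
        have hts : t.1 ≠ s.1 := by
          intro hh
          exact huv (by rw [Fin.ext hh])
        rcases hpg : pg e with _ | _
        · simp only [Bool.false_eq_true, if_false]
          intro h
          have h' : wE κ e t.1 = wE κ e s.1 := by linarith
          rcases lt_trichotomy t.1 s.1 with hlt | hlt | hlt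
          · have := wE_lt (κ := κ) (hk3 e) hlt (by have := s.2; omega)
            linarith
          · exact hts hlt
          · have := wE_lt (κ := κ) (hk3 e) hlt (by have := t.2; omega)
            linarith
        · rw [if_pos rfl, if_pos rfl]
          intro h
          rcases lt_trichotomy t.1 s.1 with hlt | hlt | hlt
          · have := yE_lt (κ := κ) (hk3 e) hlt (by have := s.2; omega)
            linarith
          · exact hts hlt
          · have := yE_lt (κ := κ) (hk3 e) hlt (by have := t.2; omega)
            linarith
      · rcases hpg : pg e with _ | _ <;> rcases hpg2' : pg f with _ | _
        · simp only [Bool.false_eq_true, if_false]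
          intro h
          have h' : wE κ e t.1 = wE κ f s.1 := by linarith
          exact inj_p2_diff hef (hk3 e) (hk3 f) t.1 s.1 h'
        · simp only [Bool.false_eq_true, if_false, eq_self_iff_true, if_true]
          have := wE_pos (κ := κ) (H := H) e t.1
          have := yE_pos (κ := κ) (H := H) f s.1
          intro h; linarith
        · simp only [Bool.false_eq_true, if_false, eq_self_iff_true, if_true]
          have := wE_pos (κ := κ) (H := H) f s.1
          have := yE_pos (κ := κ) (H := H) e t.1
          intro h; linarith
        · rw [if_pos rfl, if_pos rfl]
          exact inj_p1_diff hef (hk3 e) (hk3 f) t.1 s.1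
  · -- adjacency iff
    rintro (_ | m | ⟨e, t⟩) (_ | m' | ⟨f, s⟩) huv
    · exact absurd rfl huv
    · -- apex vs original: both sides hold
      constructor
      · intro _
        refine ⟨by simp [hzV], ?_, ?_, ?_, ?_⟩ <;> simp only [posV, loV, hiV, hzV]
        · have := (xr_bounds m').1; linarith
        · have := (xr_bounds m').2; linarith
        · have := (xr_bounds m').1; linarith
        · have := (xr_bounds m').1; linarith
      · intro _
        exact adj_none_inl m'
    · -- apex vs internal: both sides fail
      refine ⟨fun h => absurd h (adj_none_inr f s), fun h => absurd h ?_⟩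
      rintro ⟨hne, c1, c2, c3, c4⟩
      by_cases hpar : s.1 % 2 = 0
      · exact hne (by simp [hzV, hpar])
      · simp only [posV, loV, hiV] at c3 c4
        rcases hpg : pg f with _ | _
        · rw [hpg] at c4
          simp only [Bool.false_eq_true, if_false] at c4
          rw [if_neg (by omega), if_neg (by have := hko f; have := s.2; omega)] at c4
          have := wE_pos (κ := κ) (H := H) f (s.1 - 1)
          linarith
        · rw [hpg] at c3
          simp only [if_true] at c3
          rw [if_neg (by omega)] at c3
          have := yE_pos (κ := κ) (H := H) f (s.1 - 1)
          linarith
    · -- original vs apex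
      constructor
      · intro _
        refine ⟨by simp [hzV], ?_, ?_, ?_, ?_⟩ <;> simp only [posV, loV, hiV, hzV]
        · have := (xr_bounds m).1; linarith
        · have := (xr_bounds m).1; linarith
        · have := (xr_bounds m).1; linarith
        · have := (xr_bounds m).2; linarith
      · intro _
        exact (adj_none_inl m).symm
    · -- original vs original: both fail
      refine ⟨fun h => absurd h (adj_inl_inl m m'), fun h => absurd h ?_⟩
      rintro ⟨hne, -⟩
      exact hne (by simp [hzV])
    · -- original vs internal
      rw [adj_inl_inr]
      by_cases hpar : s.1 % 2 = 0
      · have hzne : hzV (H := H) κ (some (Sum.inl m)) ≠ hzV (H := H) κ (some (Sum.inr ⟨f, s⟩)) := by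
          simp [hzV, hpar]
        simp only [posV, loV, hiV]
        rcases hpg : pg f with _ | _
        · simp only [Bool.false_eq_true, if_false]
          have hiff := orig_p2 (hk3 f) (hko f) s.2 hpar m
          rw [show eMin f = sym2min f.1 from rfl, show eMax f = sym2max f.1 from rfl] at hiff
          constructor
          · intro hD
            obtain ⟨A1, A2, A3, A4⟩ := hiff.mpr hD
            exact ⟨hzne, A3, A4, A1, A2⟩
          · rintro ⟨-, c1, c2, c3, c4⟩
            exact hiff.mp ⟨c3, c4, c1, c2⟩
        · simp only [if_true]
          have hiff := orig_p1 (hk3 f) (hko f) s.2 hpar m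
          rw [show eMin f = sym2min f.1 from rfl, show eMax f = sym2max f.1 from rfl] at hiff
          constructor
          · intro hD
            obtain ⟨A1, A2, A3, A4⟩ := hiff.mpr hD
            exact ⟨hzne, A3, A4, A1, A2⟩
          · rintro ⟨-, c1, c2, c3, c4⟩
            exact hiff.mp ⟨c3, c4, c1, c2⟩
      · -- s odd: both sides fail
        constructor
        · rintro (⟨h0, -⟩ | ⟨h0, -⟩)
          · omega
          · exfalso; have := hko f; have := s.2; omega
        · rintro ⟨hne, -⟩
          exact absurd (by simp [hzV, hpar]) hne
    · -- internal vs apex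
      refine ⟨fun h => absurd h (fun hh => (adj_none_inr e t) hh.symm), fun h => absurd h ?_⟩
      rintro ⟨hne, c1, c2, c3, c4⟩
      by_cases hpar : t.1 % 2 = 0
      · exact hne (by simp [hzV, hpar])
      · simp only [posV, loV, hiV] at c1 c2
        rcases hpg : pg e with _ | _
        · rw [hpg] at c2
          simp only [Bool.false_eq_true, if_false] at c2
          rw [if_neg (by omega), if_neg (by have := hko e; have := t.2; omega)] at c2
          have := wE_pos (κ := κ) (H := H) e (t.1 - 1)
          linarith
        · rw [hpg] at c1
          simp only [if_true] at c1
          rw [if_neg (by omega)] at c1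
          have := yE_pos (κ := κ) (H := H) e (t.1 - 1)
          linarith
    · -- internal vs original
      rw [SimpleGraph.adj_comm, adj_inl_inr]
      by_cases hpar : t.1 % 2 = 0
      · have hzne : hzV (H := H) κ (some (Sum.inr ⟨e, t⟩)) ≠ hzV (H := H) κ (some (Sum.inl m')) := by
          simp [hzV, hpar]
        simp only [posV, loV, hiV]
        rcases hpg : pg e with _ | _
        · simp only [Bool.false_eq_true, if_false]
          have hiff := orig_p2 (hk3 e) (hko e) t.2 hpar m'
          rw [show eMin e = sym2min e.1 from rfl, show eMax e = sym2max e.1 from rfl] at hiff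
          constructor
          · intro hD
            obtain ⟨A1, A2, A3, A4⟩ := hiff.mpr hD
            exact ⟨hzne, A1, A2, A3, A4⟩
          · rintro ⟨-, c1, c2, c3, c4⟩
            exact hiff.mp ⟨c1, c2, c3, c4⟩
        · simp only [if_true]
          have hiff := orig_p1 (hk3 e) (hko e) t.2 hpar m'
          rw [show eMin e = sym2min e.1 from rfl, show eMax e = sym2max e.1 from rfl] at hiff
          constructor
          · intro hD
            obtain ⟨A1, A2, A3, A4⟩ := hiff.mpr hD
            exact ⟨hzne, A1, A2, A3, A4⟩
          · rintro ⟨-, c1, c2, c3, c4⟩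
            exact hiff.mp ⟨c1, c2, c3, c4⟩
      · constructor
        · rintro (⟨h0, -⟩ | ⟨h0, -⟩)
          · omega
          · exfalso; have := hko e; have := t.2; omega
        · rintro ⟨hne, -⟩
          exact absurd (by simp [hzV, hpar]) hne
    · -- internal vs internal
      rw [adj_inr_inr]
      by_cases hef : e = f
      · subst hef
        have hts : t ≠ s := fun hh => huv (by rw [hh])
        have htsv : t.1 ≠ s.1 := fun hh => hts (Fin.ext hh)
        have hnes : (⟨e, t⟩ : Σ e : H.edgeSet, Fin (κ e.1)) ≠ ⟨e, s⟩ := by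
          intro hh
          injection hh with h1 h2
          exact hts h2
        by_cases hpar : t.1 % 2 = s.1 % 2
        · constructor
          · rintro ⟨-, ⟨-, hc⟩ | ⟨-, hc⟩⟩ <;> (exfalso; omega)
          · rintro ⟨hzne, -⟩
            exact absurd (by
              simp only [hzV]
              rw [decide_eq_decide]
              constructor <;> intro <;> omega) hzne
        · have hzne : hzV (H := H) κ (some (Sum.inr ⟨e, t⟩)) ≠ hzV (H := H) κ (some (Sum.inr ⟨e, s⟩)) := by
            simp only [hzV, ne_eq, decide_eq_decide]
            intro hh
            apply hpar
            by_cases h1 : t.1 % 2 = 0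
            · have h2 := hh.mp h1
              omega
            · have h2 : ¬ s.1 % 2 = 0 := fun hx => h1 (hh.mpr hx)
              omega
          simp only [posV, loV, hiV]
          rcases hpg : pg e with _ | _
          · simp only [Bool.false_eq_true, if_false]
            have hiff := sameedge_p2 (hk3 e) t.2 s.2 htsv
            constructor
            · rintro ⟨-, ⟨-, hc⟩ | ⟨-, hc⟩⟩
              · obtain ⟨A1, A2, A3, A4⟩ := hiff.mpr (Or.inl hc)
                exact ⟨hzne, A1, A2, A3, A4⟩
              · obtain ⟨A1, A2, A3, A4⟩ := hiff.mpr (Or.inr hc)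
                exact ⟨hzne, A1, A2, A3, A4⟩
            · rintro ⟨-, c1, c2, c3, c4⟩
              refine ⟨hnes, ?_⟩
              rcases hiff.mp ⟨c1, c2, c3, c4⟩ with h | h
              · exact Or.inl ⟨by trivial, h⟩
              · exact Or.inr ⟨by trivial, h⟩
          · simp only [if_true]
            have hiff := sameedge_p1 (hk3 e) t.2 s.2 htsv
            constructor
            · rintro ⟨-, ⟨-, hc⟩ | ⟨-, hc⟩⟩
              · obtain ⟨A1, A2, A3, A4⟩ := hiff.mpr (Or.inl hc)
                exact ⟨hzne, A1, A2, A3, A4⟩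
              · obtain ⟨A1, A2, A3, A4⟩ := hiff.mpr (Or.inr hc)
                exact ⟨hzne, A1, A2, A3, A4⟩
            · rintro ⟨-, c1, c2, c3, c4⟩
              refine ⟨hnes, ?_⟩
              rcases hiff.mp ⟨c1, c2, c3, c4⟩ with h | h
              · exact Or.inl ⟨by trivial, h⟩
              · exact Or.inr ⟨by trivial, h⟩
      · -- different edges: both sides fail
        have hAdjF : ¬((⟨e, t⟩ : Σ e : H.edgeSet, Fin (κ e.1)) ≠ ⟨f, s⟩ ∧
            ((e = f ∧ t.1 + 1 = s.1) ∨ (f = e ∧ s.1 + 1 = t.1))) := by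
          rintro ⟨-, ⟨h, -⟩ | ⟨h, -⟩⟩
          · exact hef h
          · exact hef h.symm
        refine ⟨fun h => absurd h hAdjF, fun h => absurd h ?_⟩
        rintro ⟨hzne, c1, c2, c3, c4⟩
        by_cases hpar : t.1 % 2 = s.1 % 2
        · exact absurd (by
            simp only [hzV]
            rw [decide_eq_decide]
            constructor <;> intro <;> omega) hzne
        · simp only [posV, loV, hiV] at c1 c2 c3 c4
          by_cases hpt : t.1 % 2 = 0
          · have hps : s.1 % 2 = 1 := by omega
            rcases hpg : pg e with _ | _ <;> rcases hpgf : pg f with _ | _ <;>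
                rw [hpg, hpgf] at c1 c2 c3 c4 <;>
                simp only [Bool.false_eq_true, if_false, if_true] at c1 c2 c3 c4
            · -- both page 2
              rw [if_neg (by omega), if_neg (by have := hko f; have := s.2; omega)] at c4
              exact nocross_p2p2 hnest₂ (hpg2 e hpg) (hpg2 f hpgf) hef (hk3 e) (hk3 f)
                (hko e) (hko f) t.2 hpt s.2 hps
                (by linarith) (by linarith) (by linarith)
            · -- e page 2, f page 1: u horiz p2 (neg), v vert p1 (pos)
              rw [if_neg (by omega)] at c3
              have := yE_gt (κ := κ) (H := H) f (s.1 - 1)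
              have := wE_pos (κ := κ) (H := H) e t.1
              have := (xr_bounds (eMin f)).1
              linarith
            · -- e page 1, f page 2
              have h1 : xr (eMin e) ≤ (if t.1 = 0 then xr (eMin e) else yE κ e (t.1 - 1)) := by
                rcases Nat.eq_zero_or_pos t.1 with h0 | h0
                · rw [if_pos h0]
                · rw [if_neg (by omega)]
                  have := yE_gt (κ := κ) (H := H) e (t.1 - 1)
                  linarith
              have := wE_pos (κ := κ) (H := H) f s.1
              have := (xr_bounds (eMin e)).1
              linarith
            · -- both page 1
              rw [if_neg (by omega)] at c3
              exact nocross_p1p1 hnest₁ (hpg1 e hpg) (hpg1 f hpgf) hef (hk3 e) (hk3 f)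
                (hko e) (hko f) t.2 hpt s.2 hps c1 c2 c3 c4
          · have hps : s.1 % 2 = 0 := by omega
            have hpt1 : t.1 % 2 = 1 := by omega
            rcases hpg : pg e with _ | _ <;> rcases hpgf : pg f with _ | _ <;>
                rw [hpg, hpgf] at c1 c2 c3 c4 <;>
                simp only [Bool.false_eq_true, if_false, if_true] at c1 c2 c3 c4
            · -- both page 2, f's piece horizontal
              rw [if_neg (by omega), if_neg (by have := hko e; have := t.2; omega)] at c2
              exact nocross_p2p2 hnest₂ (hpg2 f hpgf) (hpg2 e hpg) (Ne.symm hef)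
                (hk3 f) (hk3 e) (hko f) (hko e) s.2 hps t.2 hpt1
                (by linarith) (by linarith) (by linarith)
            · -- e page 2 (vert, neg), f page 1 (horiz, pos)
              have h1 : xr (eMin f) ≤ (if s.1 = 0 then xr (eMin f) else yE κ f (s.1 - 1)) := by
                rcases Nat.eq_zero_or_pos s.1 with h0 | h0
                · rw [if_pos h0]
                · rw [if_neg (by omega)]
                  have := yE_gt (κ := κ) (H := H) f (s.1 - 1)
                  linarith
              have := wE_pos (κ := κ) (H := H) e t.1
              have := (xr_bounds (eMin f)).1
              linarith
            · -- e page 1 (vert, pos), f page 2 (horiz, neg)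
              rw [if_neg (by omega)] at c1
              have := yE_gt (κ := κ) (H := H) e (t.1 - 1)
              have := wE_pos (κ := κ) (H := H) f s.1
              have := (xr_bounds (eMin e)).1
              linarith
            · -- both page 1, f's piece horizontal
              rw [if_neg (by omega)] at c1
              exact nocross_p1p1 hnest₁ (hpg1 f hpgf) (hpg1 e hpg) (Ne.symm hef)
                (hk3 f) (hk3 e) (hko f) (hko e) s.2 hps t.2 hpt1 c3 c4 c1 c2

/-- If the edge set of a graph `H` on `{0,…,n-1}` splits into two nested families, then the
graph obtained by replacing each edge `e` by a path through an odd number `κ e ≥ 3` of new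
internal vertices and adding an apex adjacent to all original vertices is a StabGIG. -/
theorem apexSubdiv_nested_is_stabGIG {n : ℕ} (hn : 1 ≤ n) (H : SimpleGraph (Fin n))
    (E₁ E₂ : Set (Sym2 (Fin n))) (hunion : E₁ ∪ E₂ = H.edgeSet) (hdisj : Disjoint E₁ E₂)
    (hnest₁ : NestedFamily n E₁) (hnest₂ : NestedFamily n E₂)
    (κ : Sym2 (Fin n) → ℕ) (hκ : ∀ e ∈ H.edgeSet, Odd (κ e) ∧ 3 ≤ κ e) :
    IsStabGIG (ApexSubdiv H κ) := by
  classical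
  exact main_construction hn E₁ E₂ hunion hnest₁ hnest₂ hκ
    (fun e => decide (e.1 ∈ E₁))
    (fun e he => of_decide_eq_true he)
    (fun e he => by
      have h1 : ¬ e.1 ∈ E₁ := of_decide_eq_false he
      have h2 : e.1 ∈ E₁ ∪ E₂ := by rw [hunion]; exact e.2
      rcases h2 with h | h
      · exact absurd h h1
      · exact h)
end S13
end
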